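/- arXiv:2502.13654 — 7 statements merged into one kernel-verified Lean document; each statement's English description precedes it below -/
import Mathlib

section
/- For a skew-symmetric matrix A over a field, indexed by a finite set V, the collection of subsets X ⊆ V such that the principal submatrix A[X] is nonsingular forms the feasible sets of a delta-matroid. -/
open scoped symmDiff
open Matrix

/-- A (finite) delta-matroid given by its family of feasible sets:
a nonempty family satisfying the symmetric exchange axiom. -/
def IsDeltaMatroid {α : Type*} [DecidableEq α] (𝓕 : Set (Finset α)) : Prop :=
  𝓕.Nonempty ∧
    ∀ A ∈ 𝓕, ∀ B ∈ 𝓕, ∀ x ∈ A ∆ B, ∃ y ∈ A ∆ B, A ∆ ({x, y} : Finset α) ∈ 𝓕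

/-- The principal submatrix of `A` indexed by the finset `X`. -/
def principalSub {ι K : Type*} (A : Matrix ι ι K) (X : Finset ι) :
    Matrix X X K :=
  A.submatrix (fun i => (i : ι)) (fun j => (j : ι))

section Aux

set_option linter.unusedSectionVars false

variable {V K : Type*} [Fintype V] [DecidableEq V] [Field K]

/-- Injectivity-style reformulation of nonsingularity of a principal submatrix. -/
def Pinj (A : Matrix V V K) (X : Finset V) : Prop :=
  ∀ u : V → K, (∀ i, i ∉ X → u i = 0) → (∀ i ∈ X, A.mulVec u i = 0) → u = 0

lemma mulVec_restrict (A : Matrix V V K) (X : Finset V) (u : V → K)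
    (hu : ∀ i, i ∉ X → u i = 0) (i : V) :
    A.mulVec u i = ∑ j : X, A i (j : V) * u (j : V) := by
  rw [Matrix.mulVec, dotProduct, Finset.sum_coe_sort X (fun j => A i j * u j)]
  symm
  apply Finset.sum_subset (Finset.subset_univ X)
  intro j _ hj
  rw [hu j hj, mul_zero]

lemma feas_iff (A : Matrix V V K) (X : Finset V) :
    IsUnit (principalSub A X).det ↔ Pinj A X := by
  rw [isUnit_iff_ne_zero, Ne, ← Matrix.exists_mulVec_eq_zero_iff]
  constructor
  · intro h u hu hAu
    by_contra hu0
    apply h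
    refine ⟨fun j => u (j : V), ?_, ?_⟩
    · intro h0
      apply hu0
      funext i
      by_cases hi : i ∈ X
      · exact congrFun h0 ⟨i, hi⟩
      · exact hu i hi
    · funext i
      have : (principalSub A X).mulVec (fun j => u (j : V)) i
          = A.mulVec u (i : V) := by
        rw [mulVec_restrict A X u hu, Matrix.mulVec, dotProduct]
        rfl
      rw [this]
      simpa using hAu (i : V) i.2
  · rintro hP ⟨v, hv0, hv⟩
    apply hv0
    set u : V → K := fun i => if h : i ∈ X then v ⟨i, h⟩ else 0 with hudef
    have hu : ∀ i, i ∉ X → u i = 0 := fun i hi => dif_neg hi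
    have hmv : ∀ i : X, A.mulVec u (i : V) = (principalSub A X).mulVec v i := by
      intro i
      rw [mulVec_restrict A X u hu, Matrix.mulVec, dotProduct]
      apply Finset.sum_congr rfl
      intro j _
      congr 1
      simp [hudef, j.2]
    have h0 : u = 0 := by
      apply hP u hu
      intro i hi
      rw [hmv ⟨i, hi⟩, hv]
      rfl
    funext j
    have := congrFun h0 (j : V)
    simpa [hudef, j.2] using this

lemma Pinj_empty (A : Matrix V V K) : Pinj A ∅ := by
  intro u hu _
  funext i
  exact hu i (Finset.notMem_empty i)

lemma quad_zero (A : Matrix V V K) (hA : Aᵀ = -A) (hdiag : ∀ v, A v v = 0)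
    (u : V → K) : ∑ i, u i * A.mulVec u i = 0 := by
  have hskew : ∀ i j : V, A i j = -A j i := by
    intro i j
    have h := congrFun (congrFun hA j) i
    simpa [Matrix.transpose_apply, Matrix.neg_apply] using h
  have : ∑ i, u i * A.mulVec u i
      = ∑ p ∈ Finset.univ ×ˢ Finset.univ, A p.1 p.2 * u p.1 * u p.2 := by
    rw [Finset.sum_product]
    apply Finset.sum_congr rfl
    intro i _
    rw [Matrix.mulVec, dotProduct, Finset.mul_sum]
    apply Finset.sum_congr rfl
    intro j _
    ring
  rw [this]
  apply Finset.sum_involution (fun p _ => (p.2, p.1))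
  · intro p _
    rw [hskew p.2 p.1]
    ring
  · intro p _ hp hc
    apply hp
    have h1 : p.1 = p.2 := congrArg Prod.snd hc
    rw [h1, hdiag]
    ring
  · intro p hp; simpa using hp
  · intro p _; rfl

/-- The pivot step: from a feasible set `X`, produce a new alternating matrix
whose feasible sets are exactly the symmetric differences with `X`. -/
lemma pivot (A : Matrix V V K) (hA : Aᵀ = -A) (hdiag : ∀ v, A v v = 0)
    (X : Finset V) (hX : Pinj A X) :
    ∃ B : Matrix V V K, Bᵀ = -B ∧ (∀ v, B v v = 0) ∧
      ∀ Y : Finset V, (Pinj B Y ↔ Pinj A (X ∆ Y)) := by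
  classical
  set ψ : (V → K) →ₗ[K] (V → K) :=
    { toFun := fun u i => if i ∈ X then A.mulVec u i else u i
      map_add' := by
        intro u v; funext i
        by_cases h : i ∈ X <;> simp [h, Matrix.mulVec_add]
      map_smul' := by
        intro c u; funext i
        by_cases h : i ∈ X <;> simp [h, Matrix.mulVec_smul] } with hψdef
  set φ : (V → K) →ₗ[K] (V → K) :=
    { toFun := fun u i => if i ∈ X then u i else A.mulVec u i
      map_add' := by
        intro u v; funext i
        by_cases h : i ∈ X <;> simp [h, Matrix.mulVec_add]
      map_smul' := by
        intro c u; funext i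
        by_cases h : i ∈ X <;> simp [h, Matrix.mulVec_smul] } with hφdef
  have hψval : ∀ u i, ψ u i = if i ∈ X then A.mulVec u i else u i := fun _ _ => rfl
  have hφval : ∀ u i, φ u i = if i ∈ X then u i else A.mulVec u i := fun _ _ => rfl
  have hψinj : Function.Injective ψ := by
    rw [injective_iff_map_eq_zero]
    intro u hu
    apply hX u
    · intro i hi
      have h0 := congrFun hu i
      rw [hψval] at h0
      by_cases h : i ∈ X
      · exact absurd h hi
      · rwa [if_neg h] at h0
    · intro i hi
      have h0 := congrFun hu i
      rw [hψval, if_pos hi] at h0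
      exact h0
  have hψbij : Function.Bijective ψ :=
    ⟨hψinj, LinearMap.injective_iff_surjective.mp hψinj⟩
  set e : (V → K) ≃ₗ[K] (V → K) := LinearEquiv.ofBijective ψ hψbij with hedef
  set B : Matrix V V K := LinearMap.toMatrix' (φ ∘ₗ (e.symm : (V → K) →ₗ[K] (V → K))) with hBdef
  have hBmul : ∀ c, B.mulVec c = φ (e.symm c) := by
    intro c
    rw [hBdef, ← Matrix.toLin'_apply, Matrix.toLin'_toMatrix']
    rfl
  have hgraph : ∀ u, B.mulVec (ψ u) = φ u := by
    intro u
    rw [hBmul]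
    congr 1
    exact e.symm_apply_apply u
  -- the quadratic form vanishes on the graph of B
  have hquadB : ∀ c : V → K, ∑ i, c i * B.mulVec c i = 0 := by
    intro c
    obtain ⟨u, rfl⟩ := hψbij.2 c
    rw [hgraph]
    have h1 : ∀ i, ψ u i * φ u i = u i * A.mulVec u i := by
      intro i
      rw [hψval, hφval]
      by_cases h : i ∈ X <;> simp [h, mul_comm]
    calc ∑ i, ψ u i * φ u i = ∑ i, u i * A.mulVec u i :=
          Finset.sum_congr rfl (fun i _ => h1 i)
      _ = 0 := quad_zero A hA hdiag u
  have hsingle : ∀ (v i : V), B.mulVec (Pi.single v 1) i = B i v := by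
    intro v i
    simp [Matrix.mulVec, dotProduct, Pi.single_apply]
  have hBdiag : ∀ v, B v v = 0 := by
    intro v
    have h := hquadB (Pi.single v 1)
    simpa [hsingle, Pi.single_apply] using h
  have hpolar : ∀ j k : V, B j k + B k j = 0 := by
    intro j k
    have h1 := hquadB (Pi.single j 1 + Pi.single k 1)
    have h2 := hquadB (Pi.single j 1)
    have h3 := hquadB (Pi.single k 1)
    simp only [Matrix.mulVec_add, Pi.add_apply, add_mul, mul_add,
      Finset.sum_add_distrib] at h1
    have e1 : ∑ i, (Pi.single j 1 : V → K) i * B.mulVec (Pi.single k 1) i = B j k := by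
      simp [hsingle, Pi.single_apply]
    have e2 : ∑ i, (Pi.single k 1 : V → K) i * B.mulVec (Pi.single j 1) i = B k j := by
      simp [hsingle, Pi.single_apply]
    rw [e1, e2, h2, h3] at h1
    linear_combination h1
  have hBskew : Bᵀ = -B := by
    ext j k
    show B k j = -B j k
    exact eq_neg_of_add_eq_zero_left (hpolar k j)
  refine ⟨B, hBskew, hBdiag, ?_⟩
  intro Y
  constructor
  · -- Pinj B Y → Pinj A (X ∆ Y)
    intro hB u hu hAu
    have hc : ψ u = 0 := by
      apply hB (ψ u)
      · intro i hi
        rw [hψval]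
        by_cases h : i ∈ X
        · rw [if_pos h]
          exact hAu i (Finset.mem_symmDiff.mpr (Or.inl ⟨h, hi⟩))
        · rw [if_neg h]
          exact hu i (by rw [Finset.mem_symmDiff]; tauto)
      · intro i hi
        rw [hgraph, hφval]
        by_cases h : i ∈ X
        · rw [if_pos h]
          exact hu i (by rw [Finset.mem_symmDiff]; tauto)
        · rw [if_neg h]
          exact hAu i (Finset.mem_symmDiff.mpr (Or.inr ⟨hi, h⟩))
    exact hψinj (a₁ := u) (a₂ := 0) (by rw [hc, map_zero])
  · -- Pinj A (X ∆ Y) → Pinj B Y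
    intro hAXY c hc hBc
    obtain ⟨u, rfl⟩ := hψbij.2 c
    rw [hgraph] at hBc
    have hu0 : u = 0 := by
      apply hAXY u
      · intro i hi
        rw [Finset.mem_symmDiff] at hi
        push_neg at hi
        by_cases h : i ∈ X
        · have hiY : i ∈ Y := hi.1 h
          have h0 := hBc i hiY
          rw [hφval, if_pos h] at h0
          exact h0
        · have hiY : i ∉ Y := fun hY => h (hi.2 hY)
          have h0 := hc i hiY
          rw [hψval, if_neg h] at h0
          exact h0
      · intro i hi
        rw [Finset.mem_symmDiff] at hi
        rcases hi with ⟨hiX, hiY⟩ | ⟨hiY, hiX⟩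
        · have h0 := hc i hiY
          rw [hψval, if_pos hiX] at h0
          exact h0
        · have h0 := hBc i hiY
          rw [hφval, if_neg hiX] at h0
          exact h0
    rw [hu0, map_zero]

/-- The base case of the exchange axiom, at the empty set. -/
lemma base_exchange (B : Matrix V V K) (hB : Bᵀ = -B) (hdiag : ∀ v, B v v = 0)
    (D : Finset V) (hD : Pinj B D) (x : V) (hx : x ∈ D) :
    ∃ y ∈ D, Pinj B {x, y} := by
  have hskew : ∀ i j : V, B i j = -B j i := by
    intro i j
    have h := congrFun (congrFun hB j) i
    simpa [Matrix.transpose_apply, Matrix.neg_apply] using h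
  have hrow : ∃ y ∈ D, B x y ≠ 0 := by
    by_contra h
    push_neg at h
    have h0 := hD (Pi.single x 1)
      (by
        intro i hi
        apply Pi.single_eq_of_ne
        rintro rfl
        exact hi hx)
      (by
        intro i hi
        have hmv : B.mulVec (Pi.single x 1) i = B i x := by
          simp [Matrix.mulVec, dotProduct, Pi.single_apply]
        rw [hmv, hskew i x, h i hi, neg_zero])
    have := congrFun h0 x
    simp at this
  obtain ⟨y, hy, hxy⟩ := hrow
  have hne : y ≠ x := fun he => hxy (he ▸ hdiag x)
  have hne' : x ≠ y := fun he => hne he.symm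
  refine ⟨y, hy, ?_⟩
  intro u hu hBu
  have hsum : ∀ i, B.mulVec u i = B i x * u x + B i y * u y := by
    intro i
    rw [mulVec_restrict B {x, y} u hu i,
      Finset.sum_coe_sort ({x, y} : Finset V) (fun j => B i j * u j)]
    exact Finset.sum_pair hne'
  have huy : u y = 0 := by
    have h1 := hBu x (Finset.mem_insert_self x {y})
    rw [hsum x, hdiag x, zero_mul, zero_add] at h1
    rcases mul_eq_zero.mp h1 with h | h
    · exact absurd h hxy
    · exact h
  have hux : u x = 0 := by
    have h2 := hBu y (Finset.mem_insert_of_mem (Finset.mem_singleton_self y))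
    rw [hsum y, hdiag y, zero_mul, add_zero] at h2
    rcases mul_eq_zero.mp h2 with h | h
    · exfalso
      apply hxy
      rw [hskew x y, h, neg_zero]
    · exact h
  funext i
  by_cases hi : i ∈ ({x, y} : Finset V)
  · rcases Finset.mem_insert.mp hi with h | h
    · rw [h, hux]; rfl
    · rw [Finset.mem_singleton.mp h, huy]; rfl
  · exact hu i hi

end Aux

/-- For a skew-symmetric matrix `A` over a field (with zero diagonal, so that the
statement also covers characteristic 2), the sets `X` such that the principal
submatrix `A[X]` is nonsingular form the feasible sets of a delta-matroid. -/
theorem skew_isDeltaMatroid {V K : Type*} [Fintype V] [DecidableEq V] [Field K]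
    (A : Matrix V V K) (hA : Aᵀ = -A) (hdiag : ∀ v, A v v = 0) :
    IsDeltaMatroid {X : Finset V | IsUnit (principalSub A X).det} := by
  constructor
  · exact ⟨∅, (feas_iff A ∅).mpr (Pinj_empty A)⟩
  · intro X hX Y hY x hx
    rw [Set.mem_setOf_eq, feas_iff] at hX hY
    obtain ⟨B, hB, hBdiag, hBfeas⟩ := pivot A hA hdiag X hX
    have hD : Pinj B (X ∆ Y) := (hBfeas (X ∆ Y)).mpr
      (by rwa [symmDiff_symmDiff_cancel_left X Y])
    obtain ⟨y, hy, hxy⟩ := base_exchange B hB hBdiag (X ∆ Y) hD x hx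
    exact ⟨y, hy, by rw [Set.mem_setOf_eq, feas_iff]; exact (hBfeas {x, y}).mp hxy⟩
end

section
/- Pivoting identity (Tucker): let A be a skew-symmetric matrix indexed by [n] partitioned so A = [[B, C], [-C^T, D]] with B = A[S] nonsingular, and define A * S = [[B^{-1}, B^{-1}C], [C^T B^{-1}, D + C^T B^{-1} C]]. Then for any X ⊆ [n], det (A*S)[X] = det A[X Δ S] / det A[S]; consequently (A*S)[X] is nonsingular iff A[X Δ S] is nonsingular. -/
open Matrix
open scoped symmDiff

/-!
Let `R_Y(M, N)` take its rows in `Y` from `M` and its other rows from `N`; then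
`det R_Y(M, 1) = det M[Y]`. The matrix `A' = [[B, -C], [Cᵀ, D]]` is `A` conjugated by the
diagonal sign matrix `diag(1, -1)`, so it has the same principal minors as `A`, and the pivot
satisfies `(A*S) · R_S(A', 1) = [[1, 0], [Cᵀ, D]] = R_S(1, A')`. Since
`R_X(M, N) · R = R_X(MR, NR)`, this gives `R_X(A*S, 1) · R_S(A', 1) = R_{X Δ S}(A', 1)`, and
taking determinants, `det (A*S)[X] · det A[S] = det A[X Δ S]`.
-/

section RowPiecewise

variable {ι κ K : Type*} [DecidableEq ι]

def rowPiecewise (Y : Finset ι) (M N : Matrix ι κ K) : Matrix ι κ K :=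
  Matrix.of fun i j => if i ∈ Y then M i j else N i j

@[simp]
lemma rowPiecewise_apply (Y : Finset ι) (M N : Matrix ι κ K) (i : ι) (j : κ) :
    rowPiecewise Y M N i j = if i ∈ Y then M i j else N i j :=
  rfl

lemma rowPiecewise_mul [Fintype κ] [NonUnitalNonAssocSemiring K] {μ : Type*}
    (Y : Finset ι) (M N : Matrix ι κ K) (R : Matrix κ μ K) :
    rowPiecewise Y M N * R = rowPiecewise Y (M * R) (N * R) := by
  ext i j
  by_cases hi : i ∈ Y <;> simp [mul_apply, hi]

lemma rowPiecewise_rowPiecewise_symmDiff (X S : Finset ι) (M N : Matrix ι κ K) :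
    rowPiecewise X (rowPiecewise S N M) (rowPiecewise S M N) = rowPiecewise (X ∆ S) M N := by
  ext i j
  by_cases hX : i ∈ X <;> by_cases hS : i ∈ S <;> simp [Finset.mem_symmDiff, hX, hS]

lemma det_rowPiecewise_one [Fintype ι] [CommRing K] (Y : Finset ι) (M : Matrix ι ι K) :
    (rowPiecewise Y M 1).det = (principalSub M Y).det := by
  let e := Equiv.sumCompl (· ∈ Y)
  have hblocks : (rowPiecewise Y M 1).submatrix e e =
      fromBlocks (principalSub M Y) (M.submatrix (↑) (↑)) 0 1 := by
    ext (i | i) (j | j)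
    · simp [e, principalSub]
    · simp [e, i.2]
    · simp [e, i.2, one_apply, (ne_of_mem_of_not_mem j.2 i.2).symm]
    · simp [e, i.2, one_apply, Subtype.coe_inj]
  rw [← det_submatrix_equiv_self e, hblocks, det_fromBlocks_zero₂₁, det_one, mul_one]

lemma det_principalSub_mul_det_principalSub_of_mul_rowPiecewise [Fintype ι] [CommRing K]
    {M N : Matrix ι ι K} {S : Finset ι} (h : M * rowPiecewise S N 1 = rowPiecewise S 1 N)
    (X : Finset ι) :
    (principalSub M X).det * (principalSub N S).det = (principalSub N (X ∆ S)).det := by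
  rw [← det_rowPiecewise_one, ← det_rowPiecewise_one, ← det_rowPiecewise_one, ← det_mul,
    rowPiecewise_mul, h, Matrix.one_mul, rowPiecewise_rowPiecewise_symmDiff]

end RowPiecewise

lemma det_principalSub_diagonal_mul_mul_diagonal {ι K : Type*} [Fintype ι] [DecidableEq ι]
    [CommRing K] {d : ι → K} (hd : ∀ i, d i * d i = 1) (M : Matrix ι ι K) (Y : Finset ι) :
    (principalSub (diagonal d * M * diagonal d) Y).det = (principalSub M Y).det := by
  have hsub : principalSub (diagonal d * M * diagonal d) Y
      = diagonal (fun i : Y => d i) * principalSub M Y * diagonal (fun i : Y => d i) := by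
    ext i j
    simp [principalSub, mul_diagonal, diagonal_mul]
  rw [hsub, det_mul, det_mul, det_diagonal, mul_right_comm, ← Finset.prod_mul_distrib]
  simp [hd]

section Blocks

variable {α β K : Type*}

lemma diagonal_signs_mul_fromBlocks_mul_diagonal_signs [Fintype α] [Fintype β] [DecidableEq α]
    [DecidableEq β] [Ring K]
    (B : Matrix α α K) (C : Matrix α β K) (E : Matrix β α K) (D : Matrix β β K) :
    diagonal (Sum.elim (1 : α → K) (-1 : β → K)) * fromBlocks B C E D
        * diagonal (Sum.elim (1 : α → K) (-1 : β → K))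
      = fromBlocks B (-C) (-E) D := by
  ext (i | i) (j | j) <;> simp [mul_diagonal, diagonal_mul]

lemma det_principalSub_fromBlocks_neg_neg [Fintype α] [Fintype β] [DecidableEq α]
    [DecidableEq β] [CommRing K] (B : Matrix α α K) (C : Matrix α β K) (E : Matrix β α K)
    (D : Matrix β β K) (Y : Finset (α ⊕ β)) :
    (principalSub (fromBlocks B C E D) Y).det
      = (principalSub (fromBlocks B (-C) (-E) D) Y).det := by
  have hsigns (i : α ⊕ β) :
      Sum.elim (1 : α → K) (-1 : β → K) i * Sum.elim (1 : α → K) (-1) i = 1 := by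
    rcases i with i | i <;> simp
  rw [← diagonal_signs_mul_fromBlocks_mul_diagonal_signs,
    det_principalSub_diagonal_mul_mul_diagonal hsigns]

lemma rowPiecewise_inl_fromBlocks [Fintype α] [DecidableEq α] [DecidableEq β]
    (B B' : Matrix α α K) (C C' : Matrix α β K) (E E' : Matrix β α K) (D D' : Matrix β β K) :
    rowPiecewise (Finset.univ.map ⟨Sum.inl, Sum.inl_injective⟩)
      (fromBlocks B C E D) (fromBlocks B' C' E' D') = fromBlocks B C E' D' := by
  ext (i | i) (j | j) <;> simp

/-- The principal pivot transform `A * S` of `[[B, C], [E, D]]` on its first block. -/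
noncomputable def pivot_s7 [Fintype α] [DecidableEq α] [CommRing K] (B : Matrix α α K)
    (C : Matrix α β K) (E : Matrix β α K) (D : Matrix β β K) : Matrix (α ⊕ β) (α ⊕ β) K :=
  fromBlocks B⁻¹ (B⁻¹ * C) (E * B⁻¹) (D + E * B⁻¹ * C)

lemma pivot_mul_fromBlocks [Fintype α] [Fintype β] [DecidableEq α] [DecidableEq β]
    [CommRing K] {B : Matrix α α K} (hB : IsUnit B.det) (C : Matrix α β K) (E : Matrix β α K)
    (D : Matrix β β K) :
    pivot_s7 B C E D * fromBlocks B (-C) 0 1 = fromBlocks 1 0 E D := by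
  have hBB : B⁻¹ * B = 1 := nonsing_inv_mul B hB
  simp [pivot_s7, fromBlocks_multiply, Matrix.mul_assoc, hBB]

end Blocks

theorem tucker_pivoting_general {α β K : Type*} [Fintype α] [Fintype β]
    [DecidableEq α] [DecidableEq β] [Field K]
    (B : Matrix α α K) (C : Matrix α β K) (D : Matrix β β K)
    (hBu : IsUnit B.det)
    (A : Matrix (α ⊕ β) (α ⊕ β) K) (hA : A = Matrix.fromBlocks B C (-Cᵀ) D)
    (AS : Matrix (α ⊕ β) (α ⊕ β) K)
    (hAS : AS = Matrix.fromBlocks B⁻¹ (B⁻¹ * C) (Cᵀ * B⁻¹) (D + Cᵀ * B⁻¹ * C))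
    (S : Finset (α ⊕ β))
    (hS : S = (Finset.univ : Finset α).map ⟨Sum.inl, Sum.inl_injective⟩) :
    ∀ X : Finset (α ⊕ β),
      (principalSub AS X).det = (principalSub A (X ∆ S)).det / (principalSub A S).det ∧
      (IsUnit (principalSub AS X).det ↔ IsUnit (principalSub A (X ∆ S)).det) := by
  intro X
  have hminors (Y : Finset (α ⊕ β)) :
      (principalSub A Y).det = (principalSub (fromBlocks B (-C) Cᵀ D) Y).det := by
    rw [hA, det_principalSub_fromBlocks_neg_neg, neg_neg]
  have hpivot : AS * rowPiecewise S (fromBlocks B (-C) Cᵀ D) 1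
      = rowPiecewise S 1 (fromBlocks B (-C) Cᵀ D) := by
    rw [show AS = pivot_s7 B C Cᵀ D from hAS, hS, ← fromBlocks_one, rowPiecewise_inl_fromBlocks,
      rowPiecewise_inl_fromBlocks, pivot_mul_fromBlocks hBu]
  have hdet := det_principalSub_mul_det_principalSub_of_mul_rowPiecewise hpivot X
  rw [← hminors, ← hminors] at hdet
  have hSB : (principalSub A S).det = B.det := by
    rw [← det_rowPiecewise_one, hA, hS, ← fromBlocks_one, rowPiecewise_inl_fromBlocks,
      det_fromBlocks_zero₂₁, det_one, mul_one]
  have hSu : IsUnit (principalSub A S).det := hSB ▸ hBu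
  refine ⟨(eq_div_iff hSu.ne_zero).mpr hdet, ?_⟩
  rw [← hdet, IsUnit.mul_iff, and_iff_left hSu]

/-- Tucker's pivoting identity: let `A = [[B, C], [-Cᵀ, D]]` be skew-symmetric
with `B = A[S]` nonsingular (where `S` is the set of row/column indices of the
first block), and let `A * S = [[B⁻¹, B⁻¹C], [CᵀB⁻¹, D + CᵀB⁻¹C]]` be the pivot.
Then for every `X`, `det (A*S)[X] = det A[X Δ S] / det A[S]`; consequently
`(A*S)[X]` is nonsingular iff `A[X Δ S]` is nonsingular. -/
theorem tucker_pivoting {α β K : Type*} [Fintype α] [Fintype β]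
    [DecidableEq α] [DecidableEq β] [Field K]
    (B : Matrix α α K) (C : Matrix α β K) (D : Matrix β β K)
    (hB : Bᵀ = -B) (hD : Dᵀ = -D) (hBu : IsUnit B.det)
    (A : Matrix (α ⊕ β) (α ⊕ β) K) (hA : A = Matrix.fromBlocks B C (-Cᵀ) D)
    (AS : Matrix (α ⊕ β) (α ⊕ β) K)
    (hAS : AS = Matrix.fromBlocks B⁻¹ (B⁻¹ * C) (Cᵀ * B⁻¹) (D + Cᵀ * B⁻¹ * C))
    (S : Finset (α ⊕ β))
    (hS : S = (Finset.univ : Finset α).map ⟨Sum.inl, Sum.inl_injective⟩) :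
    ∀ X : Finset (α ⊕ β),
      (principalSub AS X).det = (principalSub A (X ∆ S)).det / (principalSub A S).det ∧
      (IsUnit (principalSub AS X).det ↔ IsUnit (principalSub A (X ∆ S)).det) :=
  tucker_pivoting_general B C D hBu A hA AS hAS S hS
end

section
/- Pfaffian-determinant decomposition: let A be a skew-symmetric matrix indexed by V and B a matrix with rows indexed by V and columns indexed by V' with |V'| ≤ |V|. Then Pf C = Σ_{U ⊆ V, |U| = |V| - |V'|} σ_U · Pf A[U] · det B[V \ U, V'], where C is the skew-symmetric block matrix [[A, B], [-B^T, O]] indexed by V ∪ V' and σ_U = ±1 is a sign depending only on U. -/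
open Matrix

open Matrix

/-- The Pfaffian of an `n × n` matrix (intended for skew-symmetric matrices),
defined as the signed sum over perfect matchings of the index set: each matching
is encoded by the permutation listing its pairs `(a₁,b₁),(a₂,b₂),…` with
`aᵢ < bᵢ` and `a₁ < a₂ < ⋯`. For odd `n` the Pfaffian is `0`. -/
noncomputable def pfaffian {n : ℕ} {K : Type*} [Field K]
    (A : Matrix (Fin n) (Fin n) K) : K :=
  if Even n then
    ∑ σ ∈ Finset.univ.filter (fun σ : Equiv.Perm (Fin n) =>
        (∀ i j : Fin n, (i : ℕ) % 2 = 0 → (j : ℕ) = (i : ℕ) + 1 → σ i < σ j) ∧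
        (∀ i j : Fin n, (i : ℕ) % 2 = 0 → (j : ℕ) % 2 = 0 → i < j → σ i < σ j)),
      ((Equiv.Perm.sign σ : ℤ) : K) *
        ∏ i : Fin n,
          (if h : (i : ℕ) % 2 = 0 ∧ (i : ℕ) + 1 < n then
            A (σ i) (σ ⟨(i : ℕ) + 1, h.2⟩) else 1)
  else 0

/-- The Pfaffian of the principal submatrix `A[U]`, read off in the order
induced by the linear order on the index type. -/
noncomputable def pfSub {ι K : Type*} [LinearOrder ι] [Field K]
    (A : Matrix ι ι K) (U : Finset ι) : K :=
  pfaffian (A.submatrix (fun i : Fin U.card => ((U.orderIsoOfFin rfl) i : ι))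
    (fun j : Fin U.card => ((U.orderIsoOfFin rfl) j : ι)))

/-!
Expand the Pfaffian as a sum over perfect matchings, each listed by a permutation `σ` whose pairs
are `(σ (2k), σ (2k+1))`. For a skew-symmetric matrix the term of `σ` depends only on the matching
it lists, so the Pfaffian is also the sum of the terms of any family of permutations that lists
every matching with a nonzero term exactly once.

In `C = [[A, B], [-Bᵀ, 0]]` the term of a matching vanishes unless every vertex of `V'` is matched
into `V`. Such a matching is given by the set `U ⊆ V` of vertices matched inside `V` (so
`|U| = |V| - |V'|`), a perfect matching of `U`, listed by some `σ`, and a bijection `ρ` from `V'`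
onto `V ∖ U`. Listing the pairs of `σ` on `U` and then the pairs `(ρ j, j)` gives a fixed
permutation depending only on `U` composed with one of sign `sign σ * sign ρ`, so its term is `±1`
times the term of `σ` in `Pf A[U]` times the term of `ρ` in `det B[V ∖ U, V']`. Summing over `U`,
`σ` and `ρ` gives the formula.
-/

open Equiv Finset

lemma Equiv.Perm.intCast_sign_eq_one_or {α R : Type*} [Fintype α] [DecidableEq α] [Ring R]
    (σ : Perm α) : ((Perm.sign σ : ℤ) : R) = 1 ∨ ((Perm.sign σ : ℤ) : R) = -1 := by
  rcases Int.units_eq_one_or (Perm.sign σ) with h | h <;> simp [h]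

lemma Equiv.Perm.sign_prodShear {α β : Type*} [Fintype α] [DecidableEq α] [Fintype β]
    [DecidableEq β] (b : Perm α) (c : α → Perm β) :
    Perm.sign (prodShear b c) = Perm.sign b ^ Fintype.card β * ∏ a, Perm.sign (c a) := by
  have : (prodShear b c : Perm (α × β)) = prodCongrLeft (fun _ => b) * prodCongrRight c := by
    ext ⟨a, x⟩ <;> rfl
  rw [this, Perm.sign_mul, Perm.sign_prodCongrLeft, Perm.sign_prodCongrRight, prod_const,
    card_univ]

lemma Equiv.Perm.exists_eq_prodShear_of_commute {α : Type*} [Finite α] {τ : Perm (α × Fin 2)}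
    (h : Commute τ (prodCongrRight fun _ => swap 0 1)) :
    ∃ (b : Perm α) (c : α → Perm (Fin 2)), τ = prodShear b c := by
  set c : α → Perm (Fin 2) := fun a => swap 0 (τ (a, 0)).2
  have hτ : ∀ a r, τ (a, r) = ((τ (a, 0)).1, c a r) := by
    intro a
    refine Fin.forall_fin_two.mpr ⟨by simp [c], ?_⟩
    have h1 : τ (a, 1) = prodCongrRight (fun _ => swap 0 1) (τ (a, 0)) := by
      rw [← Perm.mul_apply, ← h.eq]
      simp
    rw [h1, prodCongrRight_apply]
    exact congrArg _ ((by decide : ∀ t : Fin 2, swap 0 t 1 = swap 0 1 t) _).symm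
  have hinj : Function.Injective fun a => (τ (a, 0)).1 := by
    intro a a' haa'
    obtain ⟨r, hr⟩ := (c a).surjective (c a' 0)
    have : τ (a', 0) = τ (a, r) := by rw [hτ, hτ a r, hr]; exact Prod.ext haa'.symm rfl
    exact (congrArg Prod.fst (τ.injective this)).symm
  refine ⟨ofBijective _ (Finite.injective_iff_bijective.mp hinj), c, ?_⟩
  ext1 ⟨a, r⟩
  exact hτ a r

lemma Equiv.Perm.exists_comp_eq {ι α : Type*} [Finite ι] {e₁ e₂ : ι → α}
    (he₂ : Function.Injective e₂) (h : ∀ i, ∃ j, e₁ j = e₂ i) :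
    ∃ τ : Perm ι, ∀ i, e₁ (τ i) = e₂ i := by
  choose f hf using h
  have hf_inj : Function.Injective f := fun i i' hii' => he₂ (by rw [← hf, ← hf, hii'])
  exact ⟨ofBijective f (Finite.injective_iff_bijective.mp hf_inj), hf⟩

lemma Finset.exists_orderEmbOfFin_eq {α : Type*} [LinearOrder α] {s : Finset α} {k : ℕ}
    (h : s.card = k) {x : α} (hx : x ∈ s) : ∃ a, s.orderEmbOfFin h a = x := by
  rwa [← mem_coe, ← range_orderEmbOfFin s h] at hx

namespace Pfaffian

variable {K : Type*} [Field K]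

lemma pfaffian_eq_zero_of_odd {N : ℕ} {M : Matrix (Fin N) (Fin N) K} (h : Odd N) :
    pfaffian M = 0 :=
  if_neg (Nat.not_even_iff_odd.mpr h)

lemma pfSub_eq_pfaffian_submatrix {ι : Type*} [LinearOrder ι] (A : Matrix ι ι K) (U : Finset ι)
    {k : ℕ} (hU : U.card = k) :
    pfSub A U = pfaffian (A.submatrix (U.orderEmbOfFin hU) (U.orderEmbOfFin hU)) := by
  subst hU
  simp only [pfSub, coe_orderIsoOfFin_apply]

def IsFixedPointFreeInvolution {α : Type*} (π : Perm α) : Prop :=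
  Function.Involutive π ∧ ∀ x, π x ≠ x

lemma skew_apply_perm_fin_two {ι R : Type*} [Ring R] {M : Matrix ι ι R} (hM : Mᵀ = -M)
    (c : Perm (Fin 2)) (v : Fin 2 → ι) :
    M (v (c 0)) (v (c 1)) = ((Perm.sign c : ℤ) : R) * M (v 0) (v 1) := by
  rcases (by decide : ∀ c : Perm (Fin 2), c = 1 ∨ c = swap 0 1) c with rfl | rfl
  · simp
  · simpa [Perm.sign_swap] using congr_fun₂ hM (v 0) (v 1)

section Pairs

variable {N m : ℕ} (hN : N = 2 * m)

def pairPos : Fin m × Fin 2 ≃ Fin N :=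
  finProdFinEquiv.trans (finCongr (by omega))

lemma val_pairPos (p : Fin m × Fin 2) : (pairPos hN p : ℕ) = p.2 + 2 * p.1 := rfl

/-- The index set of the sum defining `pfaffian`. -/
def canonicalPerms (N : ℕ) : Finset (Perm (Fin N)) :=
  univ.filter fun σ : Perm (Fin N) =>
    (∀ i j : Fin N, (i : ℕ) % 2 = 0 → (j : ℕ) = (i : ℕ) + 1 → σ i < σ j) ∧
    (∀ i j : Fin N, (i : ℕ) % 2 = 0 → (j : ℕ) % 2 = 0 → i < j → σ i < σ j)

lemma mem_canonicalPerms_iff {σ : Perm (Fin N)} :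
    σ ∈ canonicalPerms N ↔
      (∀ k, σ (pairPos hN (k, 0)) < σ (pairPos hN (k, 1))) ∧
        StrictMono fun k => σ (pairPos hN (k, 0)) := by
  have hpos : ∀ i : Fin N, (i : ℕ) % 2 = 0 → ∃ k, i = pairPos hN (k, 0) := fun i hi =>
    ⟨⟨i / 2, by omega⟩, Fin.ext <| by simp only [val_pairPos]; omega⟩
  simp only [canonicalPerms, mem_filter, mem_univ, true_and]
  constructor
  · rintro ⟨hpair, hmono⟩
    refine ⟨fun k => hpair _ _ ?_ ?_, fun k l hkl => hmono _ _ ?_ ?_ ?_⟩ <;>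
      simp only [val_pairPos, Fin.lt_def] at * <;> omega
  · rintro ⟨hpair, hmono⟩
    refine ⟨fun i j hi hj => ?_, fun i j hi hj hij => ?_⟩
    · obtain ⟨k, rfl⟩ := hpos i hi
      convert hpair k
      ext; simp only [val_pairPos] at *; omega
    · obtain ⟨k, rfl⟩ := hpos i hi
      obtain ⟨l, rfl⟩ := hpos j hj
      exact hmono (by simp only [val_pairPos, Fin.lt_def] at *; omega)

def pairTerm (M : Matrix (Fin N) (Fin N) K) (σ : Perm (Fin N)) : K :=
  ((Perm.sign σ : ℤ) : K) * ∏ k, M (σ (pairPos hN (k, 0))) (σ (pairPos hN (k, 1)))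

lemma pfaffian_eq_sum_pairTerm (M : Matrix (Fin N) (Fin N) K) :
    pfaffian M = ∑ σ ∈ canonicalPerms N, pairTerm hN M σ := by
  rw [pfaffian, if_pos ⟨m, by omega⟩]
  refine sum_congr rfl fun σ _ => ?_
  rw [pairTerm]
  congr 1
  rw [← (pairPos hN).prod_comp, Fintype.prod_prod_type]
  refine prod_congr rfl fun k _ => ?_
  have hsucc : (⟨(pairPos hN (k, 0) : ℕ) + 1, by simp only [val_pairPos]; omega⟩ : Fin N) =
      pairPos hN (k, 1) := Fin.ext <| by simp only [val_pairPos, Fin.val_zero, Fin.val_one]; omega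
  rw [Fin.prod_univ_two, dif_pos (by simp only [val_pairPos]; omega), hsucc,
    dif_neg (by simp only [val_pairPos]; omega), mul_one]

def pairSwap : Perm (Fin N) :=
  (pairPos hN).permCongr (prodCongrRight fun _ => swap 0 1)

/-- The perfect matching `{σ (2k), σ (2k+1)}` encoded by `σ`, as an involution. -/
def pairing (σ : Perm (Fin N)) : Perm (Fin N) :=
  σ * pairSwap hN * σ⁻¹

lemma pairing_apply (σ : Perm (Fin N)) (k : Fin m) (r : Fin 2) :
    pairing hN σ (σ (pairPos hN (k, r))) = σ (pairPos hN (k, swap 0 1 r)) := by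
  simp [pairing, pairSwap, permCongr_apply]

lemma exists_apply_pairPos_eq (σ : Perm (Fin N)) (x : Fin N) :
    ∃ k r, σ (pairPos hN (k, r)) = x :=
  ⟨_, _, by rw [Prod.mk.eta, apply_symm_apply, apply_symm_apply]⟩

lemma isFixedPointFreeInvolution_pairing (σ : Perm (Fin N)) :
    IsFixedPointFreeInvolution (pairing hN σ) := by
  constructor
  · intro x
    obtain ⟨k, r, rfl⟩ := exists_apply_pairPos_eq hN σ x
    rw [pairing_apply, pairing_apply, swap_apply_self]
  · intro x hx
    obtain ⟨k, r, rfl⟩ := exists_apply_pairPos_eq hN σ x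
    rw [pairing_apply] at hx
    have := congrArg Prod.snd ((pairPos hN).injective (σ.injective hx))
    fin_cases r <;> simp at this

variable {π : Perm (Fin N)}

def lowerEnds (π : Perm (Fin N)) : Finset (Fin N) :=
  univ.filter fun x => x < π x

lemma card_lowerEnds (hN : N = 2 * m) (hπ : IsFixedPointFreeInvolution π) :
    (lowerEnds π).card = m := by
  have hcompl : (lowerEnds π)ᶜ = (lowerEnds π).map π.toEmbedding := by
    ext x
    have hx := hπ.2 x
    simp only [lowerEnds, mem_compl, mem_filter, mem_univ, true_and, mem_map_equiv, not_lt]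
    rw [← hπ.1 x, symm_apply_apply, hπ.1 x]
    exact ⟨fun h => lt_of_le_of_ne h hx, le_of_lt⟩
  have := card_add_card_compl (lowerEnds π)
  rw [hcompl, card_map, Fintype.card_fin] at this
  omega

/-- Pair `k` of the canonical encoding of `π` is `(x, π x)` with `x` the `k`-th lower end. -/
def canonicalFun (hπ : IsFixedPointFreeInvolution π) (p : Fin m × Fin 2) : Fin N :=
  (π ^ (p.2 : ℕ)) ((lowerEnds π).orderEmbOfFin (card_lowerEnds hN hπ) p.1)

lemma canonicalFun_injective (hπ : IsFixedPointFreeInvolution π) :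
    Function.Injective (canonicalFun hN hπ) := by
  set e := (lowerEnds π).orderEmbOfFin (card_lowerEnds hN hπ)
  have he : ∀ k, e k < π (e k) := fun k =>
    (mem_filter.mp ((lowerEnds π).orderEmbOfFin_mem _ k)).2
  have hcross : ∀ k l, e k ≠ π (e l) := fun k l h => by
    have hk := he k
    rw [h, hπ.1] at hk
    exact lt_asymm hk (he l)
  rintro ⟨k, r⟩ ⟨l, s⟩
  revert r s
  simp only [Fin.forall_fin_two, canonicalFun, Fin.val_zero, Fin.val_one, pow_zero, pow_one,
    Perm.one_apply, Prod.mk.injEq, and_true, and_false, zero_ne_one, one_ne_zero]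
  exact ⟨⟨fun h => e.injective h, fun h => hcross k l h⟩, fun h => hcross l k h.symm,
    fun h => e.injective (π.injective h)⟩

noncomputable def canonicalOf (hπ : IsFixedPointFreeInvolution π) : Perm (Fin N) :=
  (pairPos hN).symm.trans <| ofBijective (canonicalFun hN hπ) <|
    (Fintype.bijective_iff_injective_and_card _).mpr
      ⟨canonicalFun_injective hN hπ, by simp only [Fintype.card_prod, Fintype.card_fin]; omega⟩

lemma canonicalOf_pairPos (hπ : IsFixedPointFreeInvolution π) (p : Fin m × Fin 2) :
    canonicalOf hN hπ (pairPos hN p) = canonicalFun hN hπ p := by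
  simp [canonicalOf]

lemma canonicalOf_mem (hπ : IsFixedPointFreeInvolution π) :
    canonicalOf hN hπ ∈ canonicalPerms N := by
  rw [mem_canonicalPerms_iff hN]
  simp only [canonicalOf_pairPos, canonicalFun, Fin.val_zero, Fin.val_one, pow_zero, pow_one,
    Perm.one_apply]
  exact ⟨fun k => (mem_filter.mp ((lowerEnds π).orderEmbOfFin_mem _ k)).2,
    OrderEmbedding.strictMono _⟩

lemma pairing_canonicalOf (hπ : IsFixedPointFreeInvolution π) :
    pairing hN (canonicalOf hN hπ) = π := by
  ext x
  obtain ⟨k, r, rfl⟩ := exists_apply_pairPos_eq hN (canonicalOf hN hπ) x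
  rw [pairing_apply]
  fin_cases r <;> simp [canonicalOf_pairPos, canonicalFun, hπ.1 _]

lemma canonicalOf_pairing {σ : Perm (Fin N)} (hσ : σ ∈ canonicalPerms N) :
    canonicalOf hN (isFixedPointFreeInvolution_pairing hN σ) = σ := by
  rw [mem_canonicalPerms_iff hN] at hσ
  have he : ⇑((lowerEnds (pairing hN σ)).orderEmbOfFin
      (card_lowerEnds hN (isFixedPointFreeInvolution_pairing hN σ))) =
      fun k => σ (pairPos hN (k, 0)) := by
    refine (orderEmbOfFin_unique _ (fun k => ?_) hσ.2).symm
    simpa [lowerEnds, pairing_apply] using hσ.1 k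
  ext1 x
  obtain ⟨⟨k, r⟩, rfl⟩ := (pairPos hN).surjective x
  fin_cases r <;> simp [canonicalOf_pairPos, canonicalFun, he, pairing_apply]

lemma pairTerm_mul_of_commute {M : Matrix (Fin N) (Fin N) K} (hM : Mᵀ = -M)
    (σ : Perm (Fin N)) {τ : Perm (Fin N)} (hτ : Commute τ (pairSwap hN)) :
    pairTerm hN M (σ * τ) = pairTerm hN M σ := by
  -- `τ` permutes the pairs and reverses some of them; each reversal flips the sign of `τ` and
  -- of one factor of the product.
  obtain ⟨b, c, hbc⟩ := Perm.exists_eq_prodShear_of_commute (τ := (pairPos hN).symm.permCongr τ)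
    (by simpa [pairSwap, ← permCongr_symm] using hτ.map (pairPos hN).symm.permCongrHom)
  obtain rfl : τ = (pairPos hN).permCongr (prodShear b c) := by
    rw [← hbc]; ext; simp
  set s : K := ∏ a, ((Perm.sign (c a) : ℤ) : K)
  have hs : s * s = 1 := by
    rw [← prod_mul_distrib]
    exact prod_eq_one fun a _ => by
      rw [← Int.cast_mul, ← Units.val_mul, Int.units_mul_self, Units.val_one, Int.cast_one]
  have hsign : ((Perm.sign ((pairPos hN).permCongr (prodShear b c)) : ℤ) : K) = s := by
    simp [s, Perm.sign_prodShear, Int.units_sq]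
  have hprod : ∏ k, M ((σ * (pairPos hN).permCongr (prodShear b c)) (pairPos hN (k, 0)))
      ((σ * (pairPos hN).permCongr (prodShear b c)) (pairPos hN (k, 1))) =
      s * ∏ k, M (σ (pairPos hN (k, 0))) (σ (pairPos hN (k, 1))) := by
    simp only [Perm.mul_apply, permCongr_apply, symm_apply_apply, prodShear_apply]
    rw [prod_congr rfl fun k _ =>
        skew_apply_perm_fin_two hM (c k) fun r => σ (pairPos hN (b k, r)),
      prod_mul_distrib,
      Equiv.prod_comp b fun k => M (σ (pairPos hN (k, 0))) (σ (pairPos hN (k, 1)))]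
  rw [pairTerm, pairTerm, Perm.sign_mul, Units.val_mul, Int.cast_mul, hsign, hprod,
    mul_assoc, ← mul_assoc s, hs, one_mul]

lemma pairTerm_eq_of_pairing_eq {M : Matrix (Fin N) (Fin N) K} (hM : Mᵀ = -M)
    {σ σ' : Perm (Fin N)} (h : pairing hN σ = pairing hN σ') :
    pairTerm hN M σ = pairTerm hN M σ' := by
  have hcomm : Commute (σ⁻¹ * σ') (pairSwap hN) := by
    simp only [pairing] at h
    calc σ⁻¹ * σ' * pairSwap hN = σ⁻¹ * (σ' * pairSwap hN * σ'⁻¹) * σ' := by group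
      _ = σ⁻¹ * (σ * pairSwap hN * σ⁻¹) * σ' := by rw [h]
      _ = pairSwap hN * (σ⁻¹ * σ') := by group
  rw [← pairTerm_mul_of_commute hN hM σ hcomm, mul_inv_cancel_left]

theorem sum_pairTerm_eq_pfaffian {M : Matrix (Fin N) (Fin N) K} (hM : Mᵀ = -M) {ι : Type*}
    (s : Finset ι) (f : ι → Perm (Fin N)) (hinj : Set.InjOn (fun i => pairing hN (f i)) s)
    (hsurj : ∀ σ ∈ canonicalPerms N, pairTerm hN M σ ≠ 0 →
      ∃ i ∈ s, pairing hN (f i) = pairing hN σ) :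
    ∑ i ∈ s, pairTerm hN M (f i) = pfaffian M := by
  rw [pfaffian_eq_sum_pairTerm hN]
  refine sum_bij_ne_zero
    (fun i _ _ => canonicalOf hN (isFixedPointFreeInvolution_pairing hN (f i)))
    (fun i _ _ => canonicalOf_mem hN _) (fun i hi _ j hj _ hij => hinj hi hj ?_)
    (fun σ hσ hne => ?_) (fun i _ _ => ?_)
  · simpa only [pairing_canonicalOf] using congrArg (pairing hN) hij
  · obtain ⟨i, hi, hiσ⟩ := hsurj σ hσ hne
    refine ⟨i, hi, pairTerm_eq_of_pairing_eq hN hM hiσ ▸ hne, ?_⟩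
    simp only [hiσ, canonicalOf_pairing hN hσ]
  · exact pairTerm_eq_of_pairing_eq hN hM (pairing_canonicalOf hN _).symm

lemma apply_pairing_ne_zero {M : Matrix (Fin N) (Fin N) K} (hM : Mᵀ = -M) {σ : Perm (Fin N)}
    (h : pairTerm hN M σ ≠ 0) (x : Fin N) : M x (pairing hN σ x) ≠ 0 := by
  obtain ⟨k, r, rfl⟩ := exists_apply_pairPos_eq hN σ x
  have hk : M (σ (pairPos hN (k, 0))) (σ (pairPos hN (k, 1))) ≠ 0 :=
    prod_ne_zero_iff.mp (right_ne_zero_of_mul h) k (mem_univ k)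
  have hskew := congr_fun₂ hM (σ (pairPos hN (k, 0))) (σ (pairPos hN (k, 1)))
  rw [transpose_apply] at hskew
  rw [pairing_apply]
  revert r
  refine Fin.forall_fin_two.mpr ⟨by simpa using hk, by simpa [hskew] using hk⟩

end Pairs

section Block

variable {n n' : ℕ}

lemma castAdd_ne_natAdd (x : Fin n) (j : Fin n') : Fin.castAdd n' x ≠ Fin.natAdd n j := by
  simp only [ne_eq, Fin.ext_iff, Fin.val_castAdd, Fin.val_natAdd]
  omega

def blockSkew (A : Matrix (Fin n) (Fin n) K) (B : Matrix (Fin n) (Fin n') K) :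
    Matrix (Fin (n + n')) (Fin (n + n')) K :=
  reindex finSumFinEquiv finSumFinEquiv (fromBlocks A B (-Bᵀ) 0)

section Entries

variable (A : Matrix (Fin n) (Fin n) K) (B : Matrix (Fin n) (Fin n') K)

@[simp]
lemma blockSkew_castAdd_castAdd (x y : Fin n) :
    blockSkew A B (Fin.castAdd n' x) (Fin.castAdd n' y) = A x y := by
  simp [blockSkew]

@[simp]
lemma blockSkew_castAdd_natAdd (x : Fin n) (j : Fin n') :
    blockSkew A B (Fin.castAdd n' x) (Fin.natAdd n j) = B x j := by
  simp [blockSkew]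

@[simp]
lemma blockSkew_natAdd_natAdd (i j : Fin n') :
    blockSkew A B (Fin.natAdd n i) (Fin.natAdd n j) = 0 := by
  simp [blockSkew]

lemma transpose_blockSkew {A : Matrix (Fin n) (Fin n) K} (hA : Aᵀ = -A) :
    (blockSkew A B)ᵀ = -blockSkew A B := by
  have : fromBlocks (-A) (-B) Bᵀ 0 = -fromBlocks A B (-Bᵀ) 0 := by
    rw [fromBlocks_neg, neg_neg, neg_zero]
  rw [blockSkew, transpose_reindex, fromBlocks_transpose, hA, transpose_neg, transpose_transpose,
    transpose_zero, this]
  rfl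

end Entries

variable {m : ℕ} (hN : n + n' = 2 * (m + n'))

lemma card_compl_eq (hN : n + n' = 2 * (m + n')) {U : Finset (Fin n)} (hU : U.card = 2 * m) :
    Uᶜ.card = n' := by
  rw [card_compl, Fintype.card_fin, hU]
  omega

def blockPos : Fin (n + n') ≃ Fin (2 * m) ⊕ Fin 2 × Fin n' :=
  (pairPos hN).symm.trans <| (prodCongrLeft fun _ => finSumFinEquiv.symm).trans <|
    (sumProdDistrib _ _ _).trans <| sumCongr (pairPos rfl) (prodComm _ _)

lemma blockPos_castAdd (k : Fin m) (r : Fin 2) :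
    blockPos hN (pairPos hN (Fin.castAdd n' k, r)) = Sum.inl (pairPos rfl (k, r)) := by
  simp [blockPos]

lemma blockPos_natAdd (j : Fin n') (r : Fin 2) :
    blockPos hN (pairPos hN (Fin.natAdd m j, r)) = Sum.inr (r, j) := by
  simp [blockPos]

section Representatives

variable {U : Finset (Fin n)} (hU : U.card = 2 * m) (hUc : Uᶜ.card = n')

def blockVal : Fin (2 * m) ⊕ Fin 2 × Fin n' ≃ Fin (n + n') :=
  (sumCongr (Equiv.refl _) <|
      (prodCongrLeft fun _ => finTwoEquiv).trans (boolProdEquivSum _)).trans <|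
    (sumAssoc _ _ _).symm.trans <|
    (sumCongr ((sumCongr (U.orderIsoOfFin hU).toEquiv <| (Uᶜ.orderIsoOfFin hUc).toEquiv.trans <|
      subtypeEquivRight fun _ => mem_compl).trans (sumCompl (· ∈ U))) (Equiv.refl _)).trans
      finSumFinEquiv

lemma blockVal_inl (a : Fin (2 * m)) :
    blockVal hU hUc (Sum.inl a) = Fin.castAdd n' (U.orderEmbOfFin hU a) := by
  simp [blockVal]

lemma blockVal_inr_zero (j : Fin n') :
    blockVal hU hUc (Sum.inr (0, j)) = Fin.castAdd n' (Uᶜ.orderEmbOfFin hUc j) := by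
  simp [blockVal, finTwoEquiv]

lemma blockVal_inr_one (j : Fin n') :
    blockVal hU hUc (Sum.inr (1, j)) = Fin.natAdd n j := by
  simp [blockVal, finTwoEquiv]

def blockFrame : Perm (Fin (n + n')) :=
  (blockPos hN).trans (blockVal hU hUc)

/-- Lists the pairs of `σs`, transported to `U`, followed by the pairs `(x, n + j)` where `x` is
the `ρ j`-th element of `Uᶜ`. -/
def blockRep (σs : Perm (Fin (2 * m))) (ρ : Perm (Fin n')) : Perm (Fin (n + n')) :=
  blockFrame hN hU hUc * (blockPos hN).symm.permCongr (sumCongr σs (Perm.prodExtendRight 0 ρ))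

variable (σs : Perm (Fin (2 * m))) (ρ : Perm (Fin n'))

lemma blockRep_castAdd (k : Fin m) (r : Fin 2) :
    blockRep hN hU hUc σs ρ (pairPos hN (Fin.castAdd n' k, r)) =
      Fin.castAdd n' (U.orderEmbOfFin hU (σs (pairPos rfl (k, r)))) := by
  simp [blockRep, blockFrame, permCongr_apply, blockPos_castAdd, blockVal_inl]

lemma blockRep_natAdd_zero (j : Fin n') :
    blockRep hN hU hUc σs ρ (pairPos hN (Fin.natAdd m j, 0)) =
      Fin.castAdd n' (Uᶜ.orderEmbOfFin hUc (ρ j)) := by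
  simp [blockRep, blockFrame, permCongr_apply, blockPos_natAdd, Perm.prodExtendRight_apply_eq,
    blockVal_inr_zero]

lemma blockRep_natAdd_one (j : Fin n') :
    blockRep hN hU hUc σs ρ (pairPos hN (Fin.natAdd m j, 1)) = Fin.natAdd n j := by
  simp [blockRep, blockFrame, permCongr_apply, blockPos_natAdd,
    Perm.prodExtendRight_apply_ne _ (by decide : (1 : Fin 2) ≠ 0), blockVal_inr_one]

lemma sign_blockRep :
    Perm.sign (blockRep hN hU hUc σs ρ) =
      Perm.sign (blockFrame hN hU hUc) * (Perm.sign σs * Perm.sign ρ) := by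
  rw [blockRep, Perm.sign_mul, Perm.sign_permCongr, Perm.sign_sumCongr, Perm.sign_prodExtendRight]

lemma pairTerm_blockRep (A : Matrix (Fin n) (Fin n) K) (B : Matrix (Fin n) (Fin n') K) :
    pairTerm hN (blockSkew A B) (blockRep hN hU hUc σs ρ) =
      ((Perm.sign (blockFrame hN hU hUc) : ℤ) : K) *
        (pairTerm rfl (A.submatrix (U.orderEmbOfFin hU) (U.orderEmbOfFin hU)) σs *
          (((Perm.sign ρ : ℤ) : K) * ∏ j, B (Uᶜ.orderEmbOfFin hUc (ρ j)) j)) := by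
  rw [pairTerm, pairTerm, sign_blockRep, Fin.prod_univ_add]
  simp only [blockRep_castAdd, blockRep_natAdd_zero, blockRep_natAdd_one,
    blockSkew_castAdd_castAdd, blockSkew_castAdd_natAdd, submatrix_apply]
  push_cast
  ring

lemma sum_pairTerm_blockRep (A : Matrix (Fin n) (Fin n) K) (B : Matrix (Fin n) (Fin n') K) :
    ∑ p ∈ canonicalPerms (2 * m) ×ˢ univ,
        pairTerm hN (blockSkew A B) (blockRep hN hU hUc p.1 p.2) =
      ((Perm.sign (blockFrame hN hU hUc) : ℤ) : K) *
        pfaffian (A.submatrix (U.orderEmbOfFin hU) (U.orderEmbOfFin hU)) *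
        (B.submatrix (Uᶜ.orderEmbOfFin hUc) id).det := by
  simp only [pairTerm_blockRep, sum_product, ← mul_sum, ← sum_mul]
  rw [pfaffian_eq_sum_pairTerm rfl, det_apply', mul_assoc]
  rfl

lemma pairing_blockRep_castAdd_mem (a : Fin (2 * m)) :
    pairing hN (blockRep hN hU hUc σs ρ) (Fin.castAdd n' (U.orderEmbOfFin hU a)) =
      Fin.castAdd n' (U.orderEmbOfFin hU (pairing rfl σs a)) := by
  obtain ⟨k, r, rfl⟩ := exists_apply_pairPos_eq rfl σs a
  rw [← blockRep_castAdd hN hU hUc σs ρ k r, pairing_apply, blockRep_castAdd, pairing_apply]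

lemma pairing_blockRep_castAdd_compl (j : Fin n') :
    pairing hN (blockRep hN hU hUc σs ρ) (Fin.castAdd n' (Uᶜ.orderEmbOfFin hUc (ρ j))) =
      Fin.natAdd n j := by
  rw [← blockRep_natAdd_zero hN hU hUc σs ρ, pairing_apply, swap_apply_left,
    blockRep_natAdd_one]

lemma pairing_blockRep_natAdd (j : Fin n') :
    pairing hN (blockRep hN hU hUc σs ρ) (Fin.natAdd n j) =
      Fin.castAdd n' (Uᶜ.orderEmbOfFin hUc (ρ j)) := by
  rw [← blockRep_natAdd_one hN hU hUc σs ρ, pairing_apply, swap_apply_right,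
    blockRep_natAdd_zero]

lemma mem_iff_exists_pairing_blockRep_castAdd (x : Fin n) :
    x ∈ U ↔
      ∃ y, pairing hN (blockRep hN hU hUc σs ρ) (Fin.castAdd n' x) = Fin.castAdd n' y := by
  constructor
  · intro hx
    obtain ⟨a, rfl⟩ := exists_orderEmbOfFin_eq hU hx
    exact ⟨_, pairing_blockRep_castAdd_mem hN hU hUc σs ρ a⟩
  · rintro ⟨y, hy⟩
    by_contra hx
    obtain ⟨b, rfl⟩ := exists_orderEmbOfFin_eq hUc (mem_compl.mpr hx)
    obtain ⟨j, rfl⟩ : ∃ j, ρ j = b := ρ.surjective b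
    rw [pairing_blockRep_castAdd_compl] at hy
    exact castAdd_ne_natAdd y _ hy.symm

end Representatives

lemma eq_of_pairing_blockRep_eq {U U' : Finset (Fin n)} (hU : U.card = 2 * m)
    (hUc : Uᶜ.card = n') (hU' : U'.card = 2 * m) (hUc' : U'ᶜ.card = n')
    {σs σs' : Perm (Fin (2 * m))} (hσs : σs ∈ canonicalPerms (2 * m))
    (hσs' : σs' ∈ canonicalPerms (2 * m)) {ρ ρ' : Perm (Fin n')}
    (h : pairing hN (blockRep hN hU hUc σs ρ) = pairing hN (blockRep hN hU' hUc' σs' ρ')) :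
    U = U' ∧ σs = σs' ∧ ρ = ρ' := by
  obtain rfl : U = U' := by
    ext x
    rw [mem_iff_exists_pairing_blockRep_castAdd hN hU hUc σs ρ,
      mem_iff_exists_pairing_blockRep_castAdd hN hU' hUc' σs' ρ', h]
  obtain rfl : hU = hU' := rfl
  obtain rfl : hUc = hUc' := rfl
  have hpairing : pairing rfl σs = pairing rfl σs' := by
    ext1 a
    have := DFunLike.congr_fun h (Fin.castAdd n' (U.orderEmbOfFin hU a))
    rw [pairing_blockRep_castAdd_mem, pairing_blockRep_castAdd_mem] at this
    exact (U.orderEmbOfFin hU).injective (Fin.castAdd_injective _ _ this)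
  refine ⟨rfl, ?_, ?_⟩
  · rw [← canonicalOf_pairing rfl hσs, ← canonicalOf_pairing rfl hσs']
    simp only [hpairing]
  · ext1 j
    have := DFunLike.congr_fun h (Fin.natAdd n j)
    rw [pairing_blockRep_natAdd, pairing_blockRep_natAdd] at this
    exact (Uᶜ.orderEmbOfFin hUc).injective (Fin.castAdd_injective _ _ this)

variable {π : Perm (Fin (n + n'))}

def innerMatched (π : Perm (Fin (n + n'))) : Finset (Fin n) :=
  univ.filter fun x => ∃ y, π (Fin.castAdd n' x) = Fin.castAdd n' y

lemma notMem_innerMatched_iff (hπ : IsFixedPointFreeInvolution π) (x : Fin n) :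
    x ∉ innerMatched π ↔ ∃ j, π (Fin.natAdd n j) = Fin.castAdd n' x := by
  simp only [innerMatched, mem_filter, mem_univ, true_and, not_exists]
  constructor
  · intro hx
    induction h : π (Fin.castAdd n' x) using Fin.addCases with
    | left y => exact absurd h (hx y)
    | right j => exact ⟨j, by rw [← h, hπ.1]⟩
  · rintro ⟨j, hj⟩ y hy
    rw [← hj, hπ.1] at hy
    exact castAdd_ne_natAdd y j hy.symm

lemma card_compl_innerMatched (hπ : IsFixedPointFreeInvolution π)
    (hlow : ∀ j, ∃ y, π (Fin.natAdd n j) = Fin.castAdd n' y) :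
    (innerMatched π)ᶜ.card = n' := by
  choose φ hφ using hlow
  have hφ_inj : Function.Injective φ := fun i j h =>
    Fin.natAdd_injective _ _ (π.injective (by rw [hφ, hφ, h]))
  have : (innerMatched π)ᶜ = univ.image φ := by
    ext x
    simp only [mem_compl, notMem_innerMatched_iff hπ, mem_image, mem_univ, true_and, hφ,
      Fin.castAdd_inj]
  rw [this, card_image_of_injective _ hφ_inj, card_univ, Fintype.card_fin]

lemma exists_restrict_innerMatched (hπ : IsFixedPointFreeInvolution π)
    (hU : (innerMatched π).card = 2 * m) :
    ∃ τ : Perm (Fin (2 * m)), IsFixedPointFreeInvolution τ ∧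
      ∀ a, Fin.castAdd n' ((innerMatched π).orderEmbOfFin hU (τ a)) =
        π (Fin.castAdd n' ((innerMatched π).orderEmbOfFin hU a)) := by
  set e := (innerMatched π).orderEmbOfFin hU
  obtain ⟨τ, hτ⟩ := Perm.exists_comp_eq (e₁ := fun a => Fin.castAdd n' (e a))
    (e₂ := fun a => π (Fin.castAdd n' (e a))) (fun a b h => by simpa using h) fun a => by
      obtain ⟨y, hy⟩ := (mem_filter.mp ((innerMatched π).orderEmbOfFin_mem hU a)).2
      obtain ⟨b, rfl⟩ := exists_orderEmbOfFin_eq hU <|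
        mem_filter.mpr ⟨mem_univ _, e a, by rw [← hy, hπ.1]⟩
      exact ⟨b, hy.symm⟩
  refine ⟨τ, ⟨fun a => e.injective (Fin.castAdd_injective n n' ?_),
    fun a h => hπ.2 (Fin.castAdd n' (e a)) ?_⟩, hτ⟩
  · rw [hτ, hτ, hπ.1]
  · rw [← hτ, h]

lemma exists_blockRep_pairing_eq (hπ : IsFixedPointFreeInvolution π)
    (hlow : ∀ j, ∃ y, π (Fin.natAdd n j) = Fin.castAdd n' y) :
    ∃ (U : Finset (Fin n)) (hU : U.card = 2 * m) (hUc : Uᶜ.card = n'),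
      ∃ σs ∈ canonicalPerms (2 * m), ∃ ρ, pairing hN (blockRep hN hU hUc σs ρ) = π := by
  set U := innerMatched π
  have hUc : Uᶜ.card = n' := card_compl_innerMatched hπ hlow
  have hU : U.card = 2 * m := by
    have := card_add_card_compl U
    rw [hUc, Fintype.card_fin] at this
    omega
  obtain ⟨τ, hτ_inv, hτ⟩ := exists_restrict_innerMatched hπ hU
  set ec := Uᶜ.orderEmbOfFin hUc
  obtain ⟨ρ, hρ⟩ := Perm.exists_comp_eq (e₁ := fun j => Fin.castAdd n' (ec j))
    (e₂ := fun j => π (Fin.natAdd n j)) (fun i j h => by simpa using h) fun j => by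
      obtain ⟨y, hy⟩ := hlow j
      obtain ⟨b, rfl⟩ := exists_orderEmbOfFin_eq hUc <|
        mem_compl.mpr ((notMem_innerMatched_iff hπ y).mpr ⟨j, hy⟩)
      exact ⟨b, hy.symm⟩
  refine ⟨U, hU, hUc, canonicalOf rfl hτ_inv, canonicalOf_mem rfl hτ_inv, ρ, ?_⟩
  ext1 x
  induction x using Fin.addCases with
  | left y =>
    by_cases hy : y ∈ U
    · obtain ⟨a, rfl⟩ := exists_orderEmbOfFin_eq hU hy
      rw [pairing_blockRep_castAdd_mem, pairing_canonicalOf, hτ]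
    · obtain ⟨b, rfl⟩ := exists_orderEmbOfFin_eq hUc (mem_compl.mpr hy)
      obtain ⟨j, rfl⟩ : ∃ j, ρ j = b := ρ.surjective b
      rw [pairing_blockRep_castAdd_compl, hρ, hπ.1]
  | right j => rw [pairing_blockRep_natAdd, hρ]

lemma exists_pairing_natAdd_eq_castAdd {A : Matrix (Fin n) (Fin n) K} (hA : Aᵀ = -A)
    (B : Matrix (Fin n) (Fin n') K) {σ : Perm (Fin (n + n'))}
    (h : pairTerm hN (blockSkew A B) σ ≠ 0) (j : Fin n') :
    ∃ y, pairing hN σ (Fin.natAdd n j) = Fin.castAdd n' y := by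
  have hne := apply_pairing_ne_zero hN (transpose_blockSkew B hA) h (Fin.natAdd n j)
  induction hx : pairing hN σ (Fin.natAdd n j) using Fin.addCases with
  | left y => exact ⟨y, rfl⟩
  | right i => exact absurd (blockSkew_natAdd_natAdd A B j i) (hx ▸ hne)

theorem pfaffian_blockSkew_eq_sum {A : Matrix (Fin n) (Fin n) K} (hA : Aᵀ = -A)
    (B : Matrix (Fin n) (Fin n') K) {k : ℕ} (hk : k = 2 * m) :
    pfaffian (blockSkew A B) =
      ∑ U ∈ (univ.filter fun U : Finset (Fin n) => U.card = k).attach,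
        ∑ p ∈ canonicalPerms (2 * m) ×ˢ univ,
          pairTerm hN (blockSkew A B) (blockRep hN ((mem_filter.mp U.2).2.trans hk)
            (card_compl_eq hN ((mem_filter.mp U.2).2.trans hk)) p.1 p.2) := by
  rw [← sum_product']
  refine (sum_pairTerm_eq_pfaffian hN (transpose_blockSkew B hA) _ _ ?_ ?_).symm
  · rintro ⟨U, σs, ρ⟩ ht ⟨U', σs', ρ'⟩ ht' h
    simp only [coe_product, Set.mem_prod, mem_coe] at ht ht'
    obtain ⟨hUU', rfl, rfl⟩ := eq_of_pairing_blockRep_eq hN _ _ _ _ ht.2.1 ht'.2.1 h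
    exact Prod.ext (Subtype.ext hUU') rfl
  · intro σ _ hσ
    obtain ⟨U, hU, hUc, σs, hσs, ρ, hρ⟩ := exists_blockRep_pairing_eq hN
      (isFixedPointFreeInvolution_pairing hN σ) (exists_pairing_natAdd_eq_castAdd hN hA B hσ)
    exact ⟨(⟨U, mem_filter.mpr ⟨mem_univ U, hU.trans hk.symm⟩⟩, σs, ρ),
      mem_product.mpr ⟨mem_attach _ _, mem_product.mpr ⟨hσs, mem_univ ρ⟩⟩, hρ⟩

end Block

end Pfaffian

open Pfaffian

/-- Pfaffian–determinant decomposition: for skew-symmetric `A` (indexed by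
`V = Fin n`) and a matrix `B` with rows `V` and columns `V' = Fin n'`, `n' ≤ n`,
the Pfaffian of `C = [[A, B], [-Bᵀ, 0]]` equals
`Σ_{U ⊆ V, |U| = |V| - |V'|} σ_U · Pf A[U] · det B[V ∖ U, V']` for signs
`σ_U = ±1` depending only on `U`. -/
theorem pfaffian_det_decomposition {n n' : ℕ} (hn : n' ≤ n) {K : Type*} [Field K]
    (A : Matrix (Fin n) (Fin n) K) (hA : Aᵀ = -A)
    (B : Matrix (Fin n) (Fin n') K) :
    ∃ ε : Finset (Fin n) → K, (∀ U, ε U = 1 ∨ ε U = -1) ∧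
      pfaffian ((Matrix.reindex finSumFinEquiv finSumFinEquiv)
          (Matrix.fromBlocks A B (-Bᵀ) 0)) =
        ∑ U ∈ (Finset.univ.filter
            (fun U : Finset (Fin n) => U.card = n - n')).attach,
          ε U.1 * pfSub A U.1 *
            (B.submatrix (fun i : Fin n' =>
              (((U.1ᶜ).orderIsoOfFin (by
                have hU := (Finset.mem_filter.mp U.2).2
                rw [Finset.card_compl, Fintype.card_fin, hU]
                omega)) i : Fin n)) id).det := by
  rcases Nat.even_or_odd (n + n') with ⟨k, hk⟩ | hodd
  · obtain ⟨m, hq, hN⟩ : ∃ m, n - n' = 2 * m ∧ n + n' = 2 * (m + n') :=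
      ⟨k - n', by omega, by omega⟩
    refine ⟨fun U => if hU : U.card = n - n' then
      ((Perm.sign (blockFrame hN (hU.trans hq) (card_compl_eq hN (hU.trans hq))) : ℤ) : K)
      else 1, fun U => ?_, ?_⟩
    · dsimp only
      split_ifs
      · exact Perm.intCast_sign_eq_one_or _
      · exact Or.inl rfl
    · rw [← blockSkew, pfaffian_blockSkew_eq_sum hN hA B hq]
      refine sum_congr rfl fun U _ => ?_
      dsimp only
      rw [sum_pairTerm_blockRep, dif_pos (mem_filter.mp U.2).2,
        pfSub_eq_pfaffian_submatrix A U.1 ((mem_filter.mp U.2).2.trans hq)]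
      simp only [coe_orderIsoOfFin_apply]
  · refine ⟨fun _ => 1, fun _ => Or.inl rfl, ?_⟩
    rw [pfaffian_eq_zero_of_odd hodd, eq_comm]
    refine sum_eq_zero fun U _ => ?_
    obtain ⟨k, hk⟩ := hodd
    rw [pfSub, pfaffian_eq_zero_of_odd ⟨k - n', by rw [(mem_filter.mp U.2).2]; omega⟩, mul_zero,
      zero_mul]
end

section
/- Alternating path characterization: let G be a graph with a perfect matching M and let D be the dual of the matching delta-matroid of G (so F ⊆ V is feasible in D iff G − F has a perfect matching). Then F is feasible in D if and only if there is a collection of |F|/2 pairwise vertex-disjoint M-alternating paths whose endpoints are exactly the vertices of F and whose internal vertices avoid F. -/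
/-!
Encode the perfect matching `M` of `G` as a fixed-point-free involution `μ`, and a perfect
matching of `G - F` as an involution `m` whose fixed points are exactly `F`. Start at `f ∈ F` and
apply `μ, m, μ, m, …` alternately. Since both maps are involutions, a first repeated vertex would
either propagate back to the start, which lies in `F`, or fold onto a fixed point of `m`, which
lies in `F` as well; so the sequence does not repeat while it avoids `F`. As `V` is finite it
re-enters `F`, first at an odd step because `m` preserves the complement of `F`. This gives an
`M`-alternating `F`-path whose vertex set is closed under `μ` and `m`; the remaining paths are
found outside it.

Conversely, in the symmetric difference of `M` with the union of the paths, an inner vertex of a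
path keeps only its non-`M` path edge, a vertex off the paths keeps its `M`-edge, and the
vertices of `F` lose their only edge: this is a perfect matching of `G - F`.
-/

open Function
open scoped symmDiff

section AlternatingSequence

variable {V : Type*} (μ m : V → V)

def altStep (n : ℕ) : V → V := if Even n then μ else m

def altSeq (f : V) : ℕ → V
  | 0 => f
  | n + 1 => altStep μ m n (altSeq f n)

variable {μ m} {f : V} {n : ℕ}

@[simp] lemma altSeq_zero : altSeq μ m f 0 = f := rfl

lemma altSeq_succ : altSeq μ m f (n + 1) = altStep μ m n (altSeq μ m f n) := rfl

lemma altSeq_succ_of_even (hn : Even n) : altSeq μ m f (n + 1) = μ (altSeq μ m f n) := by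
  simp [altSeq_succ, altStep, hn]

lemma altSeq_succ_of_odd (hn : Odd n) : altSeq μ m f (n + 1) = m (altSeq μ m f n) := by
  simp [altSeq_succ, altStep, Nat.not_even_iff_odd.mpr hn]

lemma altStep_add_two_mul (n r : ℕ) : altStep μ m (n + 2 * r) = altStep μ m n := by
  simp [altStep, Nat.even_add]

lemma involutive_altStep (hμ : Involutive μ) (hm : Involutive m) (n : ℕ) :
    Involutive (altStep μ m n) := by
  unfold altStep
  split_ifs <;> assumption

lemma altSeq_eq_of_eq_add_two_mul (hμ : Involutive μ) (hm : Involutive m) {i r : ℕ}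
    (h : altSeq μ m f i = altSeq μ m f (i + 2 * r)) : f = altSeq μ m f (2 * r) := by
  induction i with
  | zero => simpa using h
  | succ i ih =>
    refine ih ((involutive_altStep hμ hm i).injective ?_)
    rwa [← altSeq_succ, ← altStep_add_two_mul i r, ← altSeq_succ, Nat.add_right_comm]

lemma altSeq_fold (hμ : Involutive μ) (hm : Involutive m) {i r : ℕ}
    (h : altSeq μ m f i = altSeq μ m f (i + 2 * r + 1)) :
    altSeq μ m f (i + r + 1) = altSeq μ m f (i + r) := by
  induction r generalizing i with
  | zero => simpa using h.symm
  | succ r ih =>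
    rw [← add_assoc, Nat.add_right_comm i r 1]
    refine ih ?_
    calc altSeq μ m f (i + 1)
        = altStep μ m (i + 2 * (r + 1)) (altSeq μ m f (i + 2 * (r + 1) + 1)) := by
          rw [altSeq_succ, h, altStep_add_two_mul]
      _ = altSeq μ m f (i + 1 + 2 * r + 1) := by
          rw [altSeq_succ, involutive_altStep hμ hm]; ring_nf

lemma altSeq_notMem_of_closed (hμ : Involutive μ) (hm : Involutive m) {U : Set V}
    (hU : ∀ x ∈ U, μ x ∈ U ∧ m x ∈ U) (hfU : f ∉ U) (t : ℕ) : altSeq μ m f t ∉ U := by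
  induction t with
  | zero => exact hfU
  | succ t ih =>
    intro hmem
    rw [altSeq_succ] at hmem
    refine ih ((involutive_altStep hμ hm t) (altSeq μ m f t) ▸ ?_)
    unfold altStep at hmem ⊢
    split_ifs at hmem ⊢
    exacts [(hU _ hmem).1, (hU _ hmem).2]

lemma exists_altSeq_eq_fst_apply (hμ : Involutive μ) {N t : ℕ} (hN : Odd N)
    (ht : t ≤ N) : ∃ s ≤ N, altSeq μ m f s = μ (altSeq μ m f t) := by
  rcases Nat.even_or_odd t with he | ho
  · have htN : t ≠ N := by rintro rfl; exact Nat.not_even_iff_odd.mpr hN he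
    exact ⟨t + 1, by omega, altSeq_succ_of_even he⟩
  · obtain ⟨s, rfl⟩ := Nat.exists_eq_add_of_lt ho.pos
    have hs : Even s := by simpa [Nat.odd_add_one] using ho
    exact ⟨s, by omega, by rw [zero_add, altSeq_succ_of_even hs, hμ]⟩

lemma altSeq_succ_eq_apply_iff_even (hμ : Involutive μ) {N j : ℕ}
    (hinj : Set.InjOn (altSeq μ m f) (Set.Iic N)) (hj : j < N) :
    altSeq μ m f (j + 1) = μ (altSeq μ m f j) ↔ Even j := by
  rcases Nat.even_or_odd j with he | ho
  · simpa [he] using altSeq_succ_of_even he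
  refine iff_of_false (fun h => ?_) (Nat.not_even_iff_odd.mpr ho)
  obtain ⟨s, rfl⟩ := Nat.exists_eq_add_of_lt ho.pos
  have hs : Even s := by simpa [Nat.odd_add_one] using ho
  rw [zero_add, altSeq_succ_of_even hs, hμ] at h
  have := hinj (show s + 1 + 1 ≤ N by omega) (show s ≤ N by omega) h
  omega

variable {F : Set V}

lemma apply_mem_iff_of_fixedPoints (hm : Involutive m) (hmF : ∀ x, m x = x ↔ x ∈ F) {x : V} :
    m x ∈ F ↔ x ∈ F := by
  rw [← hmF, ← hmF, hm x, eq_comm]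

lemma odd_and_mem_of_altStep_eq (hμne : ∀ x, μ x ≠ x) (hmF : ∀ x, m x = x ↔ x ∈ F) {x : V}
    (h : altStep μ m n x = x) : Odd n ∧ x ∈ F := by
  unfold altStep at h
  split_ifs at h with hn
  · exact absurd h (hμne x)
  · exact ⟨Nat.not_even_iff_odd.mp hn, (hmF x).mp h⟩

lemma altSeq_notMem (hm : Involutive m) (hmF : ∀ x, m x = x ↔ x ∈ F) {t : ℕ}
    (hodd : ∀ s, Odd s → s ≤ t → altSeq μ m f s ∉ F) (ht : 0 < t) : altSeq μ m f t ∉ F := by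
  rcases Nat.even_or_odd t with he | ho
  · obtain ⟨s, rfl⟩ := Nat.exists_eq_add_of_lt ht
    have hs : Odd s := by simpa [Nat.even_add_one] using he
    rw [zero_add, altSeq_succ_of_odd hs, apply_mem_iff_of_fixedPoints hm hmF]
    exact hodd s hs (by omega)
  · exact hodd t ho le_rfl

lemma injOn_altSeq (hμ : Involutive μ) (hm : Involutive m) (hμne : ∀ x, μ x ≠ x)
    (hmF : ∀ x, m x = x ↔ x ∈ F) {N : ℕ} (hf : f ∈ F) (hN : Odd N)
    (hint : ∀ t, 0 < t → t < N → altSeq μ m f t ∉ F) :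
    Set.InjOn (altSeq μ m f) (Set.Iic N) := by
  suffices h : ∀ i j, i < j → j ≤ N → altSeq μ m f i ≠ altSeq μ m f j by
    intro i hi j hj hij
    by_contra hne
    rcases Nat.lt_or_gt_of_ne hne with hlt | hlt
    · exact h i j hlt hj hij
    · exact h j i hlt hi hij.symm
  intro i j hij hjN heq
  obtain ⟨r, hr | hr⟩ := Nat.even_or_odd' (j - i)
  · obtain rfl : j = i + 2 * r := by omega
    have h2r : 2 * r < N := lt_of_le_of_ne (by omega) fun h => by
      simpa [← h] using Nat.not_even_iff_odd.mpr hN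
    exact hint (2 * r) (by omega) h2r (altSeq_eq_of_eq_add_two_mul hμ hm heq ▸ hf)
  · obtain rfl : j = i + 2 * r + 1 := by omega
    have hfix := altSeq_fold hμ hm heq
    rw [altSeq_succ] at hfix
    obtain ⟨hodd, hmem⟩ := odd_and_mem_of_altStep_eq hμne hmF hfix
    exact hint (i + r) hodd.pos (by omega) hmem

lemma exists_odd_altSeq_mem [Finite V] (hμ : Involutive μ) (hm : Involutive m)
    (hμne : ∀ x, μ x ≠ x) (hmF : ∀ x, m x = x ↔ x ∈ F) (hf : f ∈ F) :
    ∃ n, Odd n ∧ altSeq μ m f n ∈ F := by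
  by_contra! h
  have hpos (t : ℕ) (ht : 0 < t) : altSeq μ m f t ∉ F :=
    altSeq_notMem hm hmF (fun s hs _ => h s hs) ht
  refine not_injective_infinite_finite (altSeq μ m f) fun i j hij => ?_
  exact injOn_altSeq hμ hm hμne hmF hf (odd_two_mul_add_one (i + j)) (fun t ht _ => hpos t ht)
    (show i ≤ 2 * (i + j) + 1 by omega) (show j ≤ 2 * (i + j) + 1 by omega) hij

lemma exists_altSeq_return [Finite V] (hμ : Involutive μ) (hm : Involutive m)
    (hμne : ∀ x, μ x ≠ x) (hmF : ∀ x, m x = x ↔ x ∈ F) (hf : f ∈ F) :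
    ∃ N, Odd N ∧ altSeq μ m f N ∈ F ∧ ∀ t, 0 < t → t < N → altSeq μ m f t ∉ F := by
  classical
  have hex := exists_odd_altSeq_mem hμ hm hμne hmF hf
  refine ⟨Nat.find hex, (Nat.find_spec hex).1, (Nat.find_spec hex).2, fun t ht htN => ?_⟩
  exact altSeq_notMem hm hmF (fun s hs _ hmem => Nat.find_min hex (by omega) ⟨hs, hmem⟩) ht

lemma exists_altSeq_eq_snd_apply (hm : Involutive m) (hmF : ∀ x, m x = x ↔ x ∈ F)
    {N t : ℕ} (hf : f ∈ F) (hg : altSeq μ m f N ∈ F) (ht : t ≤ N) :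
    ∃ s ≤ N, altSeq μ m f s = m (altSeq μ m f t) := by
  rcases Nat.eq_zero_or_pos t with rfl | ht0
  · exact ⟨0, by omega, ((hmF f).mpr hf).symm⟩
  rcases eq_or_lt_of_le ht with rfl | htN
  · exact ⟨t, le_rfl, ((hmF _).mpr hg).symm⟩
  rcases Nat.even_or_odd t with he | ho
  · obtain ⟨s, rfl⟩ := Nat.exists_eq_add_of_lt ht0
    have hs : Odd s := by simpa [Nat.even_add_one] using he
    exact ⟨s, by omega, by rw [zero_add, altSeq_succ_of_odd hs, hm]⟩
  · exact ⟨t + 1, htN, altSeq_succ_of_odd ho⟩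

end AlternatingSequence

namespace SimpleGraph

variable {V : Type*} {G : SimpleGraph V}

namespace Walk

def ofSeq (a : ℕ → V) : (n : ℕ) → (∀ i < n, G.Adj (a i) (a (i + 1))) → G.Walk (a 0) (a n)
  | 0, _ => nil
  | n + 1, h =>
    cons (h 0 n.succ_pos) (ofSeq (fun i => a (i + 1)) n fun i hi => h (i + 1) (by omega))

variable (a : ℕ → V) (n : ℕ) (h : ∀ i < n, G.Adj (a i) (a (i + 1)))

@[simp]
lemma length_ofSeq : (ofSeq a n h).length = n := by
  induction n generalizing a with
  | zero => rfl
  | succ n ih => simp [ofSeq, ih]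

lemma getVert_ofSeq {i : ℕ} (hi : i ≤ n) : (ofSeq a n h).getVert i = a i := by
  induction n generalizing a i with
  | zero => obtain rfl := Nat.le_zero.mp hi; rfl
  | succ n ih =>
    cases i with
    | zero => rfl
    | succ i => simp [ofSeq, getVert_cons_succ, ih _ _ (Nat.le_of_succ_le_succ hi)]

lemma mem_support_ofSeq_iff {w : V} : w ∈ (ofSeq a n h).support ↔ ∃ t ≤ n, a t = w := by
  rw [mem_support_iff_exists_getVert, length_ofSeq]
  exact ⟨fun ⟨t, hw, ht⟩ => ⟨t, ht, getVert_ofSeq a n h ht ▸ hw⟩,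
    fun ⟨t, ht, hw⟩ => ⟨t, getVert_ofSeq a n h ht ▸ hw, ht⟩⟩

lemma isPath_ofSeq (hinj : Set.InjOn a (Set.Iic n)) : (ofSeq a n h).IsPath := by
  refine (IsPath.getVert_injOn_iff _).mp fun i hi j hj hij => ?_
  rw [Set.mem_ofPred_eq, length_ofSeq] at hi hj
  rw [getVert_ofSeq a n h hi, getVert_ofSeq a n h hj] at hij
  exact hinj hi hj hij

lemma forall_edges_get_mem_edgeSet_iff {u v : V} (p : G.Walk u v) (M : G.Subgraph) :
    (∀ j (h : j < p.edges.length), (p.edges.get ⟨j, h⟩ ∈ M.edgeSet ↔ Even j)) ↔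
      ∀ j < p.length, (M.Adj (p.getVert j) (p.getVert (j + 1)) ↔ Even j) := by
  simp [getElem_edges]

end Walk

lemma Subgraph.IsPerfectMatching.exists_involutive {M : G.Subgraph}
    (hM : M.IsPerfectMatching) : ∃ σ : V → V, Involutive σ ∧ ∀ x y, M.Adj x y ↔ y = σ x := by
  choose σ hσ huniq using Subgraph.isPerfectMatching_iff.mp hM
  refine ⟨σ, fun x => (huniq _ _ (hσ x).symm).symm, fun x y => ⟨huniq x y, ?_⟩⟩
  rintro rfl
  exact hσ x

lemma exists_involutive_of_isPerfectMatching_induce {F : Set V}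
    {M' : (G.induce Fᶜ).Subgraph} (hM' : M'.IsPerfectMatching) :
    ∃ m : V → V, Involutive m ∧ (∀ x, m x = x ↔ x ∈ F) ∧ ∀ x ∉ F, G.Adj x (m x) := by
  classical
  obtain ⟨σ, hσ, hσM⟩ := hM'.exists_involutive
  have hσG (x : ↥Fᶜ) : G.Adj x (σ x) := M'.adj_sub ((hσM _ _).mpr rfl)
  let m x := if h : x ∈ F then x else (σ ⟨x, h⟩ : V)
  have hm (x : ↥Fᶜ) : m x = σ x := dif_neg x.2
  refine ⟨m, fun x => ?_, fun x => ?_, fun x hx => hm ⟨x, hx⟩ ▸ hσG ⟨x, hx⟩⟩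
  · by_cases hx : x ∈ F
    · simp [m, hx]
    · rw [hm ⟨x, hx⟩, hm, hσ]
  · by_cases hx : x ∈ F
    · simp [m, hx]
    · simpa [hx, hm ⟨x, hx⟩] using (hσG ⟨x, hx⟩).ne'

lemma exists_isPerfectMatching_induce_of_neighborSet {F : Set V} {R : SimpleGraph V}
    (hRG : R ≤ G) (hR : ∀ x ∉ F, ∃ y ∉ F, R.neighborSet x = {y}) :
    ∃ M' : (G.induce Fᶜ).Subgraph, M'.IsPerfectMatching := by
  refine ⟨SimpleGraph.toSubgraph (R.induce Fᶜ) fun _ _ h => hRG h,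
    Subgraph.isPerfectMatching_iff.mpr ?_⟩
  rintro ⟨x, hx⟩
  obtain ⟨y, hy, hxy⟩ := hR x hx
  refine ⟨⟨y, hy⟩, ?_, fun z hz => Subtype.ext ?_⟩
  · change y ∈ R.neighborSet x
    simp [hxy]
  · change z.1 ∈ R.neighborSet x at hz
    simpa [hxy] using hz

structure Walk.IsAlternatingFPath {u v : V} (M : G.Subgraph) (F : Set V) (p : G.Walk u v) :
    Prop where
  isPath : p.IsPath
  odd_length : Odd p.length
  adj_iff_even : ∀ j < p.length, (M.Adj (p.getVert j) (p.getVert (j + 1)) ↔ Even j)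
  start_mem : u ∈ F
  end_mem : v ∈ F
  getVert_notMem : ∀ t, 0 < t → t < p.length → p.getVert t ∉ F

namespace Walk.IsAlternatingFPath

variable {μ : V → V} {M : G.Subgraph} {F : Set V} {u v : V} {q : G.Walk u v}

lemma of_mem_iff {F' : Set V} (hq : q.IsAlternatingFPath M F)
    (h : ∀ w ∈ q.support, w ∈ F ↔ w ∈ F') : q.IsAlternatingFPath M F' where
  isPath := hq.isPath
  odd_length := hq.odd_length
  adj_iff_even := hq.adj_iff_even
  start_mem := (h u q.start_mem_support).mp hq.start_mem
  end_mem := (h v q.end_mem_support).mp hq.end_mem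
  getVert_notMem t ht htN := by
    rw [← h _ (q.getVert_mem_support t)]
    exact hq.getVert_notMem t ht htN

lemma eq_or_eq_of_mem (hq : q.IsAlternatingFPath M F) {w : V} (hw : w ∈ q.support)
    (hwF : w ∈ F) : w = u ∨ w = v := by
  obtain ⟨t, rfl, ht⟩ := mem_support_iff_exists_getVert.mp hw
  rcases Nat.eq_zero_or_pos t with rfl | ht0
  · exact .inl q.getVert_zero
  rcases eq_or_lt_of_le ht with rfl | htN
  · exact .inr q.getVert_length
  · exact absurd hwF (hq.getVert_notMem t ht0 htN)

lemma exists_getVert_eq_of_notMem (hq : q.IsAlternatingFPath M F) {w : V}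
    (hw : w ∈ q.support) (hwF : w ∉ F) : ∃ t, 0 < t ∧ t < q.length ∧ q.getVert t = w := by
  obtain ⟨t, rfl, ht⟩ := mem_support_iff_exists_getVert.mp hw
  refine ⟨t, Nat.pos_of_ne_zero ?_, lt_of_le_of_ne ht ?_, rfl⟩
  · rintro rfl
    exact hwF (q.getVert_zero.symm ▸ hq.start_mem)
  · rintro rfl
    exact hwF (q.getVert_length.symm ▸ hq.end_mem)

lemma apply_getVert_of_even (hq : q.IsAlternatingFPath M F) (hMμ : ∀ x y, M.Adj x y ↔ y = μ x)
    {t : ℕ} (ht : Even t) (htN : t ≤ q.length) : μ (q.getVert t) = q.getVert (t + 1) := by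
  have htN' : t < q.length := lt_of_le_of_ne htN fun h =>
    Nat.not_even_iff_odd.mpr hq.odd_length (h ▸ ht)
  exact ((hMμ _ _).mp ((hq.adj_iff_even t htN').mpr ht)).symm

lemma apply_getVert_of_odd (hq : q.IsAlternatingFPath M F) (hμ : Involutive μ)
    (hMμ : ∀ x y, M.Adj x y ↔ y = μ x) {t : ℕ} (ht : Odd t) (htN : t ≤ q.length) :
    μ (q.getVert t) = q.getVert (t - 1) := by
  obtain ⟨s, rfl⟩ := Nat.exists_eq_add_of_lt ht.pos
  have hs : Even s := by simpa [Nat.odd_add_one] using ht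
  rw [zero_add, ← hq.apply_getVert_of_even hMμ hs (by omega), hμ, Nat.add_sub_cancel]

lemma apply_mem_support (hq : q.IsAlternatingFPath M F) (hμ : Involutive μ)
    (hMμ : ∀ x y, M.Adj x y ↔ y = μ x) {w : V} (hw : w ∈ q.support) : μ w ∈ q.support := by
  obtain ⟨t, rfl, ht⟩ := mem_support_iff_exists_getVert.mp hw
  rcases Nat.even_or_odd t with he | ho
  · rw [hq.apply_getVert_of_even hMμ he ht]
    exact q.getVert_mem_support _
  · rw [hq.apply_getVert_of_odd hμ hMμ ho ht]
    exact q.getVert_mem_support _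

lemma neighborSet_toSubgraph (hq : q.IsAlternatingFPath M F) (hμ : Involutive μ)
    (hMμ : ∀ x y, M.Adj x y ↔ y = μ x) {w : V} (hw : w ∈ q.support) (hwF : w ∉ F) :
    ∃ y ∉ F, y ≠ μ w ∧ q.toSubgraph.neighborSet w = {μ w, y} := by
  obtain ⟨t, ht0, htN, rfl⟩ := hq.exists_getVert_eq_of_notMem hw hwF
  rw [hq.isPath.neighborSet_toSubgraph_internal ht0.ne' htN]
  have hne : q.getVert (t - 1) ≠ q.getVert (t + 1) := fun h => by
    have := hq.isPath.getVert_injOn (show t - 1 ≤ q.length by omega)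
      (show t + 1 ≤ q.length by omega) h
    omega
  rcases Nat.even_or_odd t with he | ho
  · rw [hq.apply_getVert_of_even hMμ he htN.le, Set.pair_comm]
    refine ⟨_, hq.getVert_notMem _ ?_ (by omega), hne, rfl⟩
    obtain ⟨r, rfl⟩ := he
    omega
  · rw [hq.apply_getVert_of_odd hμ hMμ ho htN.le]
    refine ⟨_, hq.getVert_notMem _ (by omega) ?_, hne.symm, rfl⟩
    refine lt_of_le_of_ne htN fun h => Nat.not_even_iff_odd.mpr hq.odd_length ?_
    rw [← h]
    exact ho.add_one

end Walk.IsAlternatingFPath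

lemma Walk.isAlternatingFPath_iff {M : G.Subgraph} {F : Set V} {u v : V} {q : G.Walk u v} :
    q.IsAlternatingFPath M F ↔ q.IsPath ∧ Odd q.length ∧
      (∀ j (h : j < q.edges.length), (q.edges.get ⟨j, h⟩ ∈ M.edgeSet ↔ Even j)) ∧
      (u ∈ F ∧ v ∈ F) ∧ ∀ w ∈ q.support, w = u ∨ w = v ∨ w ∉ F := by
  rw [forall_edges_get_mem_edgeSet_iff]
  constructor
  · intro hq
    refine ⟨hq.isPath, hq.odd_length, hq.adj_iff_even, ⟨hq.start_mem, hq.end_mem⟩,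
      fun w hw => ?_⟩
    by_cases hwF : w ∈ F
    · exact (hq.eq_or_eq_of_mem hw hwF).imp_right .inl
    · exact .inr (.inr hwF)
  · rintro ⟨hpath, hodd, halt, ⟨hu, hv⟩, hsupp⟩
    refine ⟨hpath, hodd, halt, hu, hv, fun t ht htN hmem => ?_⟩
    rcases hsupp _ (q.getVert_mem_support t) with h | h | h
    · exact ht.ne' (hpath.getVert_injOn (show t ≤ q.length by omega) (Nat.zero_le _)
        (h.trans q.getVert_zero.symm))
    · exact htN.ne (hpath.getVert_injOn (show t ≤ q.length by omega) (le_refl q.length)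
        (h.trans q.getVert_length.symm))
    · exact h hmem

lemma exists_isAlternatingFPath [Finite V] {μ m : V → V} {M : G.Subgraph} {F : Set V}
    (hμ : Involutive μ) (hμG : ∀ x, G.Adj x (μ x)) (hMμ : ∀ x y, M.Adj x y ↔ y = μ x)
    (hm : Involutive m) (hmF : ∀ x, m x = x ↔ x ∈ F) (hmG : ∀ x ∉ F, G.Adj x (m x))
    {U : Set V} (hU : ∀ x ∈ U, μ x ∈ U ∧ m x ∈ U) {f : V} (hf : f ∈ F) (hfU : f ∉ U) :
    ∃ g, ∃ q : G.Walk f g, q.IsAlternatingFPath M F ∧ f ≠ g ∧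
      ∀ w ∈ q.support, μ w ∈ q.support ∧ m w ∈ q.support ∧ w ∉ U := by
  have hμne (x : V) : μ x ≠ x := (hμG x).ne'
  obtain ⟨N, hN, hg, hint⟩ := exists_altSeq_return hμ hm hμne hmF hf
  have hinj := injOn_altSeq hμ hm hμne hmF hf hN hint
  have hadj (j : ℕ) (hj : j < N) : G.Adj (altSeq μ m f j) (altSeq μ m f (j + 1)) := by
    rcases Nat.even_or_odd j with he | ho
    · rw [altSeq_succ_of_even he]; exact hμG _
    · rw [altSeq_succ_of_odd ho]; exact hmG _ (hint j ho.pos hj)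
  let q : G.Walk f (altSeq μ m f N) := Walk.ofSeq (altSeq μ m f) N hadj
  have hlen : q.length = N := Walk.length_ofSeq _ N hadj
  have hv (t : ℕ) (ht : t ≤ N) : q.getVert t = altSeq μ m f t := Walk.getVert_ofSeq _ N hadj ht
  have hsupp (w : V) : w ∈ q.support ↔ ∃ t ≤ N, altSeq μ m f t = w :=
    Walk.mem_support_ofSeq_iff _ N hadj
  refine ⟨_, q, ⟨Walk.isPath_ofSeq _ N hadj hinj, hlen.symm ▸ hN, fun j hj => ?_, hf, hg,
    fun t ht htN => ?_⟩, fun h => hN.pos.ne (hinj (Nat.zero_le N) (le_refl N) h),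
    fun w hw => ?_⟩
  · rw [hlen] at hj
    rw [hv j hj.le, hv (j + 1) hj, hMμ]
    exact altSeq_succ_eq_apply_iff_even hμ hinj hj
  · rw [hlen] at htN
    exact hv t htN.le ▸ hint t ht htN
  · obtain ⟨t, ht, rfl⟩ := (hsupp w).mp hw
    obtain ⟨s, hs, hμs⟩ := exists_altSeq_eq_fst_apply (m := m) (f := f) hμ hN ht
    obtain ⟨s', hs', hms'⟩ := exists_altSeq_eq_snd_apply hm hmF hf hg ht
    exact ⟨(hsupp _).mpr ⟨s, hs, hμs⟩, (hsupp _).mpr ⟨s', hs', hms'⟩,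
      altSeq_notMem_of_closed hμ hm hU hfU t⟩

lemma neighborSet_iSup_toSubgraph_eq_empty {ι : Type*} {u v : ι → V}
    {p : ∀ i, G.Walk (u i) (v i)} {x : V} (hx : ∀ i, x ∉ (p i).support) :
    (⨆ i, (p i).toSubgraph.spanningCoe).neighborSet x = ∅ := by
  ext y
  simpa using fun i hadj => hx i ((p i).mem_verts_toSubgraph.mp hadj.fst_mem)

variable [DecidableEq V]

lemma Walk.IsAlternatingFPath.sdiff_union_support {M : G.Subgraph} {F U : Finset V} {u v : V}
    {q : G.Walk u v} (hq : q.IsAlternatingFPath M F) :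
    F \ (U ∪ q.support.toFinset) = (F \ U) \ {u, v} := by
  ext w
  simp only [Finset.mem_sdiff, Finset.mem_union, List.mem_toFinset, Finset.mem_insert,
    Finset.mem_singleton, not_or]
  constructor
  · rintro ⟨hwF, hwU, hwq⟩
    exact ⟨⟨hwF, hwU⟩, fun h => hwq (h ▸ q.start_mem_support),
      fun h => hwq (h ▸ q.end_mem_support)⟩
  · rintro ⟨⟨hwF, hwU⟩, hwu, hwv⟩
    exact ⟨hwF, hwU, fun hwq => (hq.eq_or_eq_of_mem hwq hwF).elim hwu hwv⟩

structure IsAlternatingPathCover (M : G.Subgraph) (F : Finset V) {k : ℕ} {u v : Fin k → V}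
    (p : ∀ i, G.Walk (u i) (v i)) : Prop where
  card_eq : F.card = 2 * k
  isAlternatingFPath : ∀ i, (p i).IsAlternatingFPath M F
  disjoint : ∀ i j, i ≠ j → Disjoint (p i).support.toFinset (p j).support.toFinset
  biUnion_eq : Finset.univ.biUnion (fun i => ({u i, v i} : Finset V)) = F

lemma isAlternatingPathCover_iff {M : G.Subgraph} {F : Finset V} {k : ℕ} {u v : Fin k → V}
    {p : ∀ i, G.Walk (u i) (v i)} :
    IsAlternatingPathCover M F p ↔
      F.card = 2 * k ∧
        (∀ i, (p i).IsPath) ∧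
        (∀ i, Odd (p i).length) ∧
        (∀ i, ∀ j : ℕ, ∀ h : j < (p i).edges.length,
          ((p i).edges.get ⟨j, h⟩ ∈ M.edgeSet ↔ Even j)) ∧
        (∀ i, u i ∈ F ∧ v i ∈ F) ∧
        (∀ i, ∀ w ∈ (p i).support, w = u i ∨ w = v i ∨ w ∉ F) ∧
        (∀ i j, i ≠ j → Disjoint (p i).support.toFinset (p j).support.toFinset) ∧
        Finset.univ.biUnion (fun i => ({u i, v i} : Finset V)) = F := by
  constructor
  · rintro ⟨hcard, hpath, hdisj, hbU⟩
    have h i := Walk.isAlternatingFPath_iff.mp (hpath i)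
    exact ⟨hcard, fun i => (h i).1, fun i => (h i).2.1, fun i => (h i).2.2.1,
      fun i => (h i).2.2.2.1, fun i => (h i).2.2.2.2, hdisj, hbU⟩
  · rintro ⟨hcard, h1, h2, h3, h4, h5, hdisj, hbU⟩
    exact ⟨hcard, fun i => Walk.isAlternatingFPath_iff.mpr ⟨h1 i, h2 i, h3 i, h4 i, h5 i⟩,
      hdisj, hbU⟩

lemma IsAlternatingPathCover.cons {M : G.Subgraph} {F : Finset V} {f g : V} {q : G.Walk f g}
    (hq : q.IsAlternatingFPath M F) (hfg : f ≠ g) {k : ℕ} {u v : Fin k → V}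
    {p : ∀ i, G.Walk (u i) (v i)} (hp : IsAlternatingPathCover M (F \ {f, g}) p)
    (hdisj : ∀ i, Disjoint q.support.toFinset (p i).support.toFinset) :
    IsAlternatingPathCover M F
      (Fin.cons (α := fun i => G.Walk ((Fin.cons f u : Fin (k + 1) → V) i)
        ((Fin.cons g v : Fin (k + 1) → V) i)) q p) := by
  have hfgF : {f, g} ⊆ F := by
    simpa [Finset.insert_subset_iff] using ⟨hq.start_mem, hq.end_mem⟩
  have hfg_notMem (i : Fin k) : f ∉ (p i).support ∧ g ∉ (p i).support := by
    have h := Finset.disjoint_left.mp (hdisj i)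
    simpa using And.intro (h (by simp)) (h (by simp))
  constructor
  · rw [← Finset.card_sdiff_add_card_eq_card hfgF, hp.card_eq, Finset.card_pair hfg]
    ring
  · refine Fin.cases hq fun i => (hp.isAlternatingFPath i).of_mem_iff fun w hw => ?_
    have hwf : w ≠ f := fun h => (hfg_notMem i).1 (h ▸ hw)
    have hwg : w ≠ g := fun h => (hfg_notMem i).2 (h ▸ hw)
    simp [hwf, hwg]
  · intro i j hij
    rcases Fin.eq_zero_or_eq_succ i with rfl | ⟨i, rfl⟩ <;>
      rcases Fin.eq_zero_or_eq_succ j with rfl | ⟨j, rfl⟩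
    · exact absurd rfl hij
    · exact hdisj j
    · exact (hdisj i).symm
    · exact hp.disjoint i j (ne_of_apply_ne Fin.succ hij)
  · ext w
    have hw := congrArg (w ∈ ·) hp.biUnion_eq
    simp only [Finset.mem_biUnion, Finset.mem_univ, true_and] at hw ⊢
    rw [Fin.exists_fin_succ]
    simp only [Fin.cons_zero, Fin.cons_succ, hw, Finset.mem_sdiff]
    have := @hfgF w
    tauto

/-- The finset `U` collects the vertices of paths that are already chosen; as it is closed under
`μ` and `m`, every alternating sequence started outside `U` stays outside `U`. -/
lemma exists_isAlternatingPathCover_sdiff [Finite V] {μ m : V → V} {M : G.Subgraph}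
    {F : Finset V} (hμ : Involutive μ) (hμG : ∀ x, G.Adj x (μ x))
    (hMμ : ∀ x y, M.Adj x y ↔ y = μ x) (hm : Involutive m) (hmF : ∀ x, m x = x ↔ x ∈ F)
    (hmG : ∀ x ∉ F, G.Adj x (m x)) (U : Finset V) (hU : ∀ x ∈ U, μ x ∈ U ∧ m x ∈ U) :
    ∃ k, ∃ u v : Fin k → V, ∃ p : ∀ i, G.Walk (u i) (v i),
      IsAlternatingPathCover M (F \ U) p ∧ ∀ i, ∀ w ∈ (p i).support, w ∉ U := by
  induction h : (F \ U).card using Nat.strong_induction_on generalizing U with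
  | _ n ih =>
  rcases (F \ U).eq_empty_or_nonempty with hFU | ⟨f, hf⟩
  · exact ⟨0, Fin.elim0, Fin.elim0, fun i => i.elim0,
      ⟨by simp [hFU], fun i => i.elim0, fun i => i.elim0, by simp [hFU]⟩, fun i => i.elim0⟩
  rw [Finset.mem_sdiff] at hf
  obtain ⟨g, q, hq, hfg, hS⟩ := exists_isAlternatingFPath (F := ↑F) (U := ↑U) hμ hμG hMμ hm
    hmF hmG hU hf.1 hf.2
  have hU' : ∀ x ∈ U ∪ q.support.toFinset,
      μ x ∈ U ∪ q.support.toFinset ∧ m x ∈ U ∪ q.support.toFinset := by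
    simp only [Finset.mem_union, List.mem_toFinset]
    rintro x (hx | hx)
    · exact ⟨.inl (hU x hx).1, .inl (hU x hx).2⟩
    · exact ⟨.inr (hS x hx).1, .inr (hS x hx).2.1⟩
  have hlt : (F \ (U ∪ q.support.toFinset)).card < n := by
    have hfgS : {f, g} ⊆ F \ U := by
      simpa [Finset.insert_subset_iff] using ⟨hf, hq.end_mem, (hS g q.end_mem_support).2.2⟩
    rw [hq.sdiff_union_support, ← h]
    exact Finset.card_lt_card (Finset.sdiff_ssubset hfgS (by simp))
  obtain ⟨k, u, v, p, hp, hpU⟩ := ih _ hlt _ hU' rfl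
  have hpq (i : Fin k) : Disjoint q.support.toFinset (p i).support.toFinset :=
    Finset.disjoint_left.mpr fun w hwq hwp =>
      hpU i w (List.mem_toFinset.mp hwp) (Finset.mem_union_right _ hwq)
  have hqFU : q.IsAlternatingFPath M ↑(F \ U) :=
    hq.of_mem_iff fun w hw => by simp [(hS w hw).2.2]
  refine ⟨k + 1, _, _, _,
    IsAlternatingPathCover.cons hqFU hfg (hq.sdiff_union_support ▸ hp) hpq, fun i w hw => ?_⟩
  rcases Fin.eq_zero_or_eq_succ i with rfl | ⟨i, rfl⟩
  · exact (hS w hw).2.2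
  · exact fun hwU => hpU i w hw (Finset.mem_union_left _ hwU)

lemma IsAlternatingPathCover.exists_mem_support {M : G.Subgraph} {F : Finset V} {k : ℕ}
    {u v : Fin k → V} {p : ∀ i, G.Walk (u i) (v i)} (hp : IsAlternatingPathCover M F p) {w : V}
    (hw : w ∈ F) : ∃ i, w ∈ (p i).support := by
  rw [← hp.biUnion_eq] at hw
  obtain ⟨i, -, hi⟩ := Finset.mem_biUnion.mp hw
  rcases Finset.mem_insert.mp hi with h | h
  · exact ⟨i, h ▸ (p i).start_mem_support⟩
  · exact ⟨i, Finset.mem_singleton.mp h ▸ (p i).end_mem_support⟩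

lemma IsAlternatingPathCover.neighborSet_iSup_of_mem_support {M : G.Subgraph} {F : Finset V}
    {k : ℕ} {u v : Fin k → V} {p : ∀ i, G.Walk (u i) (v i)} (hp : IsAlternatingPathCover M F p)
    {x : V} {i : Fin k} (hxi : x ∈ (p i).support) :
    (⨆ j, (p j).toSubgraph.spanningCoe).neighborSet x = (p i).toSubgraph.neighborSet x := by
  ext y
  simp only [neighborSet_iSup, Set.mem_iUnion]
  refine ⟨fun ⟨j, hj⟩ => ?_, fun h => ⟨i, h⟩⟩
  obtain rfl : j = i := by
    by_contra hji
    have hxj : x ∈ (p j).support := (p j).mem_verts_toSubgraph.mp hj.fst_mem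
    exact Finset.disjoint_left.mp (hp.disjoint j i hji) (List.mem_toFinset.mpr hxj)
      (List.mem_toFinset.mpr hxi)
  exact hj

lemma exists_isPerfectMatching_induce_of_isAlternatingPathCover {M : G.Subgraph}
    (hM : M.IsPerfectMatching) {F : Finset V} {k : ℕ} {u v : Fin k → V}
    {p : ∀ i, G.Walk (u i) (v i)} (hp : IsAlternatingPathCover M F p) :
    ∃ M' : (G.induce (↑F : Set V)ᶜ).Subgraph, M'.IsPerfectMatching := by
  obtain ⟨μ, hμ, hMμ⟩ := hM.exists_involutive
  let H : SimpleGraph V := ⨆ i, (p i).toSubgraph.spanningCoe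
  have hHG : H ≤ G := iSup_le fun i => (p i).toSubgraph.spanningCoe_le
  refine exists_isPerfectMatching_induce_of_neighborSet (R := M.spanningCoe ∆ H)
    (symmDiff_le_sup.trans (sup_le M.spanningCoe_le hHG)) fun x hx => ?_
  have hMx : M.spanningCoe.neighborSet x = {μ x} := by ext y; simp [hMμ]
  change ∃ y ∉ (↑F : Set V), M.spanningCoe.neighborSet x ∆ H.neighborSet x = {y}
  rw [hMx]
  by_cases hxp : ∃ i, x ∈ (p i).support
  · obtain ⟨i, hxi⟩ := hxp
    obtain ⟨y, hyF, hyμ, hnbr⟩ :=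
      (hp.isAlternatingFPath i).neighborSet_toSubgraph hμ hMμ hxi hx
    refine ⟨y, hyF, ?_⟩
    rw [hp.neighborSet_iSup_of_mem_support hxi, hnbr]
    ext z
    simp only [Set.mem_symmDiff, Set.mem_singleton_iff, Set.mem_insert_iff]
    constructor
    · rintro (⟨rfl, h⟩ | ⟨rfl | rfl, h⟩) <;> tauto
    · rintro rfl
      exact .inr ⟨.inr rfl, hyμ⟩
  · push Not at hxp
    refine ⟨μ x, fun hμx => ?_, by simp [H, neighborSet_iSup_toSubgraph_eq_empty hxp]⟩
    obtain ⟨i, hμxi⟩ := hp.exists_mem_support hμx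
    exact hxp i (hμ x ▸ (hp.isAlternatingFPath i).apply_mem_support hμ hMμ hμxi)

theorem exists_isPerfectMatching_induce_iff [Finite V] {M : G.Subgraph}
    (hM : M.IsPerfectMatching) (F : Finset V) :
    (∃ M' : (G.induce (↑F : Set V)ᶜ).Subgraph, M'.IsPerfectMatching) ↔
      ∃ k, ∃ u v : Fin k → V, ∃ p : ∀ i, G.Walk (u i) (v i), IsAlternatingPathCover M F p := by
  refine ⟨fun ⟨M', hM'⟩ => ?_, fun ⟨k, u, v, p, hp⟩ =>
    exists_isPerfectMatching_induce_of_isAlternatingPathCover hM hp⟩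
  obtain ⟨μ, hμ, hMμ⟩ := hM.exists_involutive
  obtain ⟨m, hm, hmF, hmG⟩ := exists_involutive_of_isPerfectMatching_induce hM'
  obtain ⟨k, u, v, p, hp, -⟩ := exists_isAlternatingPathCover_sdiff hμ
    (fun x => M.adj_sub ((hMμ x _).mpr rfl)) hMμ hm hmF hmG ∅ (by simp)
  exact ⟨k, u, v, p, by simpa using hp⟩

end SimpleGraph

open SimpleGraph

/-- Alternating path characterization of the dual matching delta-matroid:
for a graph `G` with a perfect matching `M`, a set `F` satisfies that `G − F`
has a perfect matching iff there is a collection of `|F|/2` pairwise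
vertex-disjoint `M`-alternating paths (paths alternating between `M`-edges and
non-`M`-edges, beginning and ending with an `M`-edge) whose endpoints are
exactly the vertices of `F` and whose internal vertices avoid `F`. -/
theorem dual_matching_feasible_iff_alternating_paths
    {V : Type*} [Fintype V] [DecidableEq V] (G : SimpleGraph V)
    (M : G.Subgraph) (hM : M.IsPerfectMatching) (F : Finset V) :
    (∃ M' : (G.induce ((↑F : Set V)ᶜ)).Subgraph, M'.IsPerfectMatching) ↔
      ∃ (k : ℕ) (u v : Fin k → V) (p : ∀ i, G.Walk (u i) (v i)),
        F.card = 2 * k ∧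
        (∀ i, (p i).IsPath) ∧
        -- alternation, starting and ending with matching edges:
        (∀ i, Odd (p i).length) ∧
        (∀ i, ∀ j : ℕ, ∀ h : j < (p i).edges.length,
          ((p i).edges.get ⟨j, h⟩ ∈ M.edgeSet ↔ Even j)) ∧
        -- endpoints in `F`, internal vertices outside `F`:
        (∀ i, u i ∈ F ∧ v i ∈ F) ∧
        (∀ i, ∀ w ∈ (p i).support, w = u i ∨ w = v i ∨ w ∉ F) ∧
        -- pairwise vertex-disjoint:
        (∀ i j, i ≠ j → Disjoint (p i).support.toFinset (p j).support.toFinset) ∧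
        -- endpoints are exactly the vertices of `F`:
        Finset.univ.biUnion (fun i => ({u i, v i} : Finset V)) = F := by
  simp only [← isAlternatingPathCover_iff]
  exact exists_isPerfectMatching_induce_iff hM F
end

section
/- Let D be a delta-matroid in twist representation D = D(A) Δ S where A is skew-symmetric, and let F_max be a maximum-cardinality feasible set of D. Then A[S Δ F_max] is nonsingular, and the pivoted matrix A* = A * (S Δ F_max) satisfies D = D(A*) Δ F_max and A*[V \ F_max] is the zero matrix. -/
open Matrix
open scoped symmDiff

/-- Sparse twist representation: let `D = D(A) Δ S` with `A` skew-symmetric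
(and zero diagonal) and let `F_max` be a maximum-cardinality feasible set of `D`.
Then `A[S Δ F_max]` is nonsingular, and the pivoted matrix
`A* = A * (S Δ F_max)` — characterized by Tucker's pivoting identity
`A*[X]` nonsingular iff `A[X Δ (S Δ F_max)]` nonsingular — satisfies
`D = D(A*) Δ F_max` and `A*[V ∖ F_max] = 0`. -/
theorem sparse_twist_representation {V K : Type*} [Fintype V] [DecidableEq V]
    [Field K] (A Astar : Matrix V V K) (S Fmax : Finset V)
    (hA : Aᵀ = -A) (hAd : ∀ v, A v v = 0)
    (hAs : Astarᵀ = -Astar) (hAsd : ∀ v, Astar v v = 0)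
    -- `F_max` is feasible in `D = D(A) Δ S`:
    (hfeas : IsUnit (principalSub A (Fmax ∆ S)).det)
    -- `F_max` has maximum cardinality among the feasible sets of `D`:
    (hmax : ∀ F : Finset V, IsUnit (principalSub A (F ∆ S)).det → F.card ≤ Fmax.card)
    -- `A*` is the pivot `A * (S Δ F_max)`, via Tucker's pivoting identity:
    (hpivot : ∀ X : Finset V,
      IsUnit (principalSub Astar X).det ↔ IsUnit (principalSub A (X ∆ (S ∆ Fmax))).det) :
    -- `A[S Δ F_max]` is nonsingular:
    IsUnit (principalSub A (S ∆ Fmax)).det ∧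
    -- `D = D(A*) Δ F_max`:
    (∀ F : Finset V,
      IsUnit (principalSub Astar (F ∆ Fmax)).det ↔ IsUnit (principalSub A (F ∆ S)).det) ∧
    -- `A*[V ∖ F_max]` is the zero matrix:
    (∀ v w : V, v ∉ Fmax → w ∉ Fmax → Astar v w = 0) := by
  have hcomm : S ∆ Fmax = Fmax ∆ S := symmDiff_comm S Fmax
  refine ⟨hcomm ▸ hfeas, ?_, ?_⟩
  · intro F
    have h1 : (F ∆ Fmax) ∆ (S ∆ Fmax) = F ∆ S := by
      ext a
      simp only [Finset.mem_symmDiff]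
      tauto
    rw [hpivot, h1]
  · intro v w hv hw
    by_contra hne
    have hvw : v ≠ w := by
      rintro rfl; exact hne (hAsd v)
    -- det of the 2x2 principal submatrix of Astar at {v,w}
    set X : Finset V := {v, w} with hX
    have hvX : v ∈ X := by simp [hX]
    have hwX : w ∈ X := by simp [hX]
    have hskew : Astar w v = - Astar v w := by
      have := congrFun (congrFun hAs v) w
      simpa [Matrix.transpose_apply] using this
    let f : Fin 2 → X := ![⟨v, hvX⟩, ⟨w, hwX⟩]
    have hbij : Function.Bijective f := by
      constructor
      · intro i j hij
        fin_cases i <;> fin_cases j <;> simp_all [f, hvw, hvw.symm]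
      · rintro ⟨x, hx⟩
        rcases Finset.mem_insert.mp hx with h | h
        · exact ⟨0, by simp [f, h]⟩
        · exact ⟨1, by simp [f, Finset.mem_singleton.mp h]⟩
    let e : Fin 2 ≃ X := Equiv.ofBijective f hbij
    have hdet : (principalSub Astar X).det
        = ((principalSub Astar X).submatrix e e).det :=
      (Matrix.det_submatrix_equiv_self e _).symm
    have hdet2 : ((principalSub Astar X).submatrix e e).det
        = Astar v w * Astar v w := by
      rw [Matrix.det_fin_two]
      have h00 : ((principalSub Astar X).submatrix e e) 0 0 = Astar v v := rfl
      have h01 : ((principalSub Astar X).submatrix e e) 0 1 = Astar v w := rfl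
      have h10 : ((principalSub Astar X).submatrix e e) 1 0 = Astar w v := rfl
      have h11 : ((principalSub Astar X).submatrix e e) 1 1 = Astar w w := rfl
      rw [h00, h01, h10, h11, hAsd v, hAsd w, hskew]
      ring
    have hunit : IsUnit (principalSub Astar X).det := by
      rw [hdet, hdet2]
      exact (isUnit_iff_ne_zero.mpr (mul_ne_zero hne hne))
    have h2 : X ∆ (S ∆ Fmax) = (Fmax ∆ X) ∆ S := by
      rw [← symmDiff_assoc, symmDiff_comm (X ∆ S) Fmax, ← symmDiff_assoc]
    have hfeas2 : IsUnit (principalSub A ((Fmax ∆ X) ∆ S)).det := by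
      rw [← h2]; exact (hpivot X).mp hunit
    have hcard := hmax _ hfeas2
    have hdisj : Disjoint Fmax X := by
      simp [hX, Finset.disjoint_insert_right, hv, hw]
    have hXcard : X.card = 2 := by
      simp [hX, hvw]
    have : (Fmax ∆ X).card = Fmax.card + 2 := by
      rw [hdisj.symmDiff_eq_sup]
      rw [Finset.sup_eq_union, Finset.card_union_of_disjoint hdisj, hXcard]
    omega
end

section
/- In a K₄-free graph, any strong edge set induces a subgraph of maximum degree at most 2; hence every connected component of the subgraph induced by a strong edge set is a path or a cycle. -/
/-- In a `K₄`-free graph, any strong edge set induces a subgraph of maximum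
degree at most 2: every vertex is incident to at most 2 edges of the strong set. -/
theorem strong_set_max_degree_le_two {V : Type*} [Fintype V] [DecidableEq V]
    (G : SimpleGraph V) (hK4 : G.CliqueFree 4)
    (S : Set (Sym2 V)) (hSE : S ⊆ G.edgeSet)
    (hstrong : ∀ u v w : V, u ≠ w → s(u, v) ∈ S → s(v, w) ∈ S → G.Adj u w) :
    ∀ v : V, {w : V | s(v, w) ∈ S}.ncard ≤ 2 := by
  intro v
  by_contra h
  push_neg at h
  rw [Set.two_lt_ncard (Set.toFinite _)] at h
  obtain ⟨a, ha, b, hb, c, hc, hab, hac, hbc⟩ := h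
  simp only [Set.mem_setOf_eq] at ha hb hc
  have hva : G.Adj v a := (G.mem_edgeSet).1 (hSE ha)
  have hvb : G.Adj v b := (G.mem_edgeSet).1 (hSE hb)
  have hvc : G.Adj v c := (G.mem_edgeSet).1 (hSE hc)
  have hab' : G.Adj a b := hstrong a v b hab (by rwa [Sym2.eq_swap]) hb
  have hac' : G.Adj a c := hstrong a v c hac (by rwa [Sym2.eq_swap]) hc
  have hbc' : G.Adj b c := hstrong b v c hbc (by rwa [Sym2.eq_swap]) hc
  apply hK4 {v, a, b, c}
  constructor
  · intro x hx y hy hxy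
    simp only [Finset.coe_insert, Set.mem_insert_iff, Finset.coe_singleton,
      Set.mem_singleton_iff] at hx hy
    rcases hx with rfl | rfl | rfl | rfl <;> rcases hy with rfl | rfl | rfl | rfl <;>
      first
      | exact absurd rfl hxy
      | assumption
      | exact hva.symm
      | exact hvb.symm
      | exact hvc.symm
      | exact hab'.symm
      | exact hac'.symm
      | exact hbc'.symm
  · rw [Finset.card_insert_of_notMem (by simp [hva.ne, hvb.ne, hvc.ne]),
      Finset.card_insert_of_notMem (by simp [hab, hac]),
      Finset.card_insert_of_notMem (by simp [hbc]), Finset.card_singleton]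
end

section
/- A path on p ≥ 3 vertices all of whose edges lie in a strong edge set of a graph G can be replaced by a vertex-disjoint packing of triangles of G plus possibly one edge, using at least p − 1 edges in total: if p = 3q or p = 3q + 1 there is a packing of q vertex-disjoint triangles on its vertices with 3q ≥ p − 1 edges, and if p = 3q + 2 there is a packing of q vertex-disjoint triangles plus one disjoint edge with 3q + 1 = p − 1 edges. -/
/-- A path on `p ≥ 3` vertices all of whose edges lie in a strong edge set of `G`
can be replaced by a vertex-disjoint packing of triangles of `G` (plus possibly
one edge) using at least `p − 1` edges: if `p = 3q` or `p = 3q + 1` the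
consecutive triples `{v_{3j}, v_{3j+1}, v_{3j+2}}`, `j < q`, form `q` vertex-disjoint
triangles with `3q ≥ p − 1` edges; if `p = 3q + 2` these `q` triangles together with
the disjoint edge `v_{3q} v_{3q+1}` use `3q + 1 = p − 1` edges. -/
theorem strong_path_triangle_packing {V : Type*} (G : SimpleGraph V)
    (S : Set (Sym2 V)) (hSE : S ⊆ G.edgeSet)
    (hstrong : ∀ u v w : V, u ≠ w → s(u, v) ∈ S → s(v, w) ∈ S → G.Adj u w)
    (p : ℕ) (hp : 3 ≤ p) (v : ℕ → V)
    (hinj : ∀ i j, i < p → j < p → v i = v j → i = j)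
    (hS : ∀ i, i + 1 < p → s(v i, v (i + 1)) ∈ S) :
    (∀ q : ℕ, (p = 3 * q ∨ p = 3 * q + 1) →
      (∀ j < q, G.Adj (v (3 * j)) (v (3 * j + 1)) ∧
        G.Adj (v (3 * j + 1)) (v (3 * j + 2)) ∧
        G.Adj (v (3 * j)) (v (3 * j + 2))) ∧ p - 1 ≤ 3 * q) ∧
    (∀ q : ℕ, p = 3 * q + 2 →
      (∀ j < q, G.Adj (v (3 * j)) (v (3 * j + 1)) ∧
        G.Adj (v (3 * j + 1)) (v (3 * j + 2)) ∧
        G.Adj (v (3 * j)) (v (3 * j + 2))) ∧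
      G.Adj (v (3 * q)) (v (3 * q + 1)) ∧ 3 * q + 1 = p - 1) := by
  have hadj : ∀ i, i + 1 < p → G.Adj (v i) (v (i + 1)) := fun i hi =>
    (SimpleGraph.mem_edgeSet G).mp (hSE (hS i hi))
  have hskip : ∀ i, i + 2 < p → G.Adj (v i) (v (i + 2)) := by
    intro i hi
    apply hstrong (v i) (v (i+1)) (v (i+2))
    · intro h
      have := hinj i (i+2) (by omega) hi h
      omega
    · exact hS i (by omega)
    · exact hS (i+1) (by omega)
  have tri : ∀ q j, j < q → 3 * q ≤ p →
      G.Adj (v (3 * j)) (v (3 * j + 1)) ∧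
        G.Adj (v (3 * j + 1)) (v (3 * j + 2)) ∧
        G.Adj (v (3 * j)) (v (3 * j + 2)) := by
    intro q j hj hq
    refine ⟨hadj _ (by omega), hadj _ (by omega), hskip _ (by omega)⟩
  constructor
  · intro q hq
    exact ⟨fun j hj => tri q j hj (by omega), by omega⟩
  · intro q hq
    exact ⟨fun j hj => tri q j hj (by omega), hadj _ (by omega), by omega⟩
end
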